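/- arXiv:1909.01096 — 9 statements merged into one kernel-verified Lean document; each statement's English description precedes it below -/
import Mathlib

section
/- Let j ≥ 0 be a half-integer, m₁, m₂, n half-integers with j+m₁, j+m₂, j+n ∈ ℤ and −j ≤ m₁, m₂ ≤ j, let λ > 0 be real, and let p be an integer with max(0, m₁−m₂) ≤ p ≤ min(j−m₂, j+m₁). Define ω : ℂ × ℝ → ℂ by ω(z,w) = z^p · conj(z)^{−m₁+m₂+p} · (−1+|z|²+2iw)^{j+m₁−p} · (−1+|z|²−2iw)^{j−m₂−p} · (1+|z|²−2iw)^{(−2j−m₂+n−λ−2)/2} · (1+|z|²+2iw)^{(−2j+m₂−n−λ−2)/2}, where all integer powers are the usual ones and the last two powers are principal-branch complex powers (well defined since Re(1+|z|²∓2iw) > 0). If m₁ ≠ m₂, then the integral of ω(x+iy, w) over (x,y,w) ∈ ℝ³ equals 0. -/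
/-!
Rotating `z ↦ c z` by a unit complex number `c` multiplies `ω(z, w)` by `c ^ (m₁ - m₂)`, since
`c ^ p * conj c ^ (m₂ - m₁ + p) = c ^ (m₁ - m₂)` and every other factor depends on `z` only
through `|z|`. Rotations preserve Lebesgue measure, so the integral `I` of `ω` satisfies
`I = c ^ (m₁ - m₂) * I`; for `m₁ ≠ m₂` some `c` makes `c ^ (m₁ - m₂) ≠ 1`, forcing `I = 0`.
-/

open MeasureTheory

/-- A half-integer is an element of `(1/2)ℤ`. -/
def HalfInt (x : ℝ) : Prop := ∃ k : ℤ, x = k / 2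

/-- The summand `ω^{(j,n)}_{m₁,m₂}(p; z, w) = z^p conj(z)^{−m₁+m₂+p}
(−1+|z|²+2iw)^{j+m₁−p} (−1+|z|²−2iw)^{j−m₂−p} (1+|z|²−2iw)^{(−2j−m₂+n−λ−2)/2}
(1+|z|²+2iw)^{(−2j+m₂−n−λ−2)/2}` appearing in the expansion of the
intertwining-operator integrand for `SU(2,1)`; the last two powers are
principal-branch complex powers. -/
noncomputable def omegaZ (j m₁ m₂ n lam : ℝ) (p : ℤ) (z : ℂ) (w : ℝ) : ℂ :=
  z ^ p * ((starRingEnd ℂ) z) ^ (⌊-m₁ + m₂⌋ + p) *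
    (-1 + ((‖z‖ : ℝ) : ℂ) ^ 2 + 2 * Complex.I * (w : ℂ)) ^ (⌊j + m₁⌋ - p) *
    (-1 + ((‖z‖ : ℝ) : ℂ) ^ 2 - 2 * Complex.I * (w : ℂ)) ^ (⌊j - m₂⌋ - p) *
    (1 + ((‖z‖ : ℝ) : ℂ) ^ 2 - 2 * Complex.I * (w : ℂ)) ^
      ((((-2 * j - m₂ + n - lam - 2) / 2 : ℝ) : ℂ)) *
    (1 + ((‖z‖ : ℝ) : ℂ) ^ 2 + 2 * Complex.I * (w : ℂ)) ^
      ((((-2 * j + m₂ - n - lam - 2) / 2 : ℝ) : ℂ))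

theorem MeasureTheory.MeasurePreserving.integral_eq_zero_of_comp_eq_smul {α E 𝕜 : Type*}
    [MeasurableSpace α] {μ : Measure α} [NormedAddCommGroup E] [NormedSpace ℝ E]
    [NormedDivisionRing 𝕜] [Module 𝕜 E] [NormSMulClass 𝕜 E] [SMulCommClass ℝ 𝕜 E]
    {T : α ≃ᵐ α} (hT : MeasurePreserving T μ μ) {f : α → E} {a : 𝕜} (ha : a ≠ 1)
    (hf : ∀ x, f (T x) = a • f x) :
    ∫ x, f x ∂μ = 0 := by
  have hfix : a • ∫ x, f x ∂μ = ∫ x, f x ∂μ := by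
    rw [← integral_smul, ← hT.integral_comp' f]
    simp only [hf]
  have : (a - 1) • ∫ x, f x ∂μ = 0 := by rw [sub_smul, one_smul, hfix, sub_self]
  exact (smul_eq_zero.mp this).resolve_left (sub_ne_zero.mpr ha)

theorem Circle.exists_zpow_ne_one {k : ℤ} (hk : k ≠ 0) : ∃ u : Circle, u ^ k ≠ 1 := by
  refine ⟨Circle.exp (Real.pi / k), ?_⟩
  rw [← Circle.exp_intCast_mul, mul_div_cancel₀ _ (Int.cast_ne_zero.mpr hk)]
  exact Circle.exp_pi_ne_one

theorem integral_complex_prod_real {E : Type*} [NormedAddCommGroup E] [NormedSpace ℝ E]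
    (g : ℂ × ℝ → E) :
    ∫ q : ℝ × ℝ × ℝ, g ((q.1 : ℂ) + (q.2.1 : ℂ) * Complex.I, q.2.2) = ∫ zw : ℂ × ℝ, g zw := by
  let e : ℂ × ℝ ≃ᵐ ℝ × ℝ × ℝ :=
    (Complex.measurableEquivRealProd.prodCongr (MeasurableEquiv.refl ℝ)).trans
      MeasurableEquiv.prodAssoc
  have he : MeasurePreserving e :=
    volume_preserving_prodAssoc.comp
      (Complex.volume_preserving_equiv_real_prod.prod (MeasurePreserving.id _))
  rw [← he.integral_comp e.measurableEmbedding]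
  refine integral_congr_ae (Filter.Eventually.of_forall fun zw => ?_)
  change g ((zw.1.re : ℂ) + (zw.1.im : ℂ) * Complex.I, zw.2) = g zw
  rw [Complex.re_add_im]

theorem measurePreserving_rotation_prodCongr_refl (u : Circle) :
    MeasurePreserving ((rotation u).toMeasurableEquiv.prodCongr (MeasurableEquiv.refl ℝ))
      (volume : Measure (ℂ × ℝ)) volume :=
  (rotation u).measurePreserving.prod (MeasurePreserving.id _)

theorem omegaZ_mul_left_of_norm_eq_one (j m₁ m₂ n lam : ℝ) (p : ℤ) {c : ℂ} (hc : ‖c‖ = 1)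
    (z : ℂ) (w : ℝ) :
    omegaZ j m₁ m₂ n lam p (c * z) w = c ^ (-⌊-m₁ + m₂⌋) * omegaZ j m₁ m₂ n lam p z w := by
  have hc0 : c ≠ 0 := norm_ne_zero_iff.mp (hc ▸ one_ne_zero)
  have hconj : (starRingEnd ℂ) c = c⁻¹ := (Complex.inv_eq_conj hc).symm
  have hpow : c ^ p * c⁻¹ ^ (⌊-m₁ + m₂⌋ + p) = c ^ (-⌊-m₁ + m₂⌋) := by
    rw [inv_zpow', ← zpow_add₀ hc0]
    ring_nf
  simp only [omegaZ, norm_mul, hc, one_mul, map_mul, mul_zpow, hconj, ← hpow]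
  ring

theorem su21_off_diagonal_vanishes_general (j m₁ m₂ n lam : ℝ) (p : ℤ)
    (hjm₁ : ∃ a : ℤ, j + m₁ = a) (hjm₂ : ∃ a : ℤ, j + m₂ = a)
    (hne : m₁ ≠ m₂) :
    ∫ q : ℝ × ℝ × ℝ, omegaZ j m₁ m₂ n lam p ((q.1 : ℂ) + (q.2.1 : ℂ) * Complex.I) q.2.2 = 0 := by
  obtain ⟨a₁, ha₁⟩ := hjm₁
  obtain ⟨a₂, ha₂⟩ := hjm₂
  have hk : -⌊-m₁ + m₂⌋ ≠ 0 := by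
    have : -m₁ + m₂ = ((a₂ - a₁ : ℤ) : ℝ) := by push_cast; linarith
    rw [this, Int.floor_intCast, neg_ne_zero, sub_ne_zero]
    rintro rfl
    exact hne (by linarith)
  obtain ⟨u, hu⟩ := Circle.exists_zpow_ne_one hk
  rw [integral_complex_prod_real (fun zw => omegaZ j m₁ m₂ n lam p zw.1 zw.2)]
  refine (measurePreserving_rotation_prodCongr_refl u).integral_eq_zero_of_comp_eq_smul
    (a := ((u ^ (-⌊-m₁ + m₂⌋) : Circle) : ℂ)) (Circle.coe_eq_one.not.mpr hu) fun zw => ?_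
  rw [Circle.coe_zpow]
  exact omegaZ_mul_left_of_norm_eq_one j m₁ m₂ n lam p (Circle.norm_coe u) zw.1 zw.2

/-- For `m₁ ≠ m₂` the integral of `ω^{(j,n)}_{m₁,m₂}(p; x+iy, w)` over `(x,y,w) ∈ ℝ³`
vanishes: the long intertwining operator acts diagonally on each `K`-type. -/
theorem su21_off_diagonal_vanishes (j m₁ m₂ n lam : ℝ) (p : ℤ)
    (hj : HalfInt j) (hj0 : 0 ≤ j) (hm₁ : HalfInt m₁) (hm₂ : HalfInt m₂) (hn : HalfInt n)
    (hjm₁ : ∃ a : ℤ, j + m₁ = a) (hjm₂ : ∃ a : ℤ, j + m₂ = a) (hjn : ∃ a : ℤ, j + n = a)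
    (hm₁l : -j ≤ m₁) (hm₁u : m₁ ≤ j) (hm₂l : -j ≤ m₂) (hm₂u : m₂ ≤ j)
    (hlam : 0 < lam)
    (hpl : max 0 ⌊m₁ - m₂⌋ ≤ p) (hpu : p ≤ min ⌊j - m₂⌋ ⌊j + m₁⌋)
    (hne : m₁ ≠ m₂) :
    ∫ q : ℝ × ℝ × ℝ, omegaZ j m₁ m₂ n lam p ((q.1 : ℂ) + (q.2.1 : ℂ) * Complex.I) q.2.2 = 0 :=
  su21_off_diagonal_vanishes_general j m₁ m₂ n lam p hjm₁ hjm₂ hne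
end

section
/- Let k, l, δ be integers with k ≥ 0, |l| ≤ k and k ≡ l (mod 2), and let λ be a real number with λ > 0 and λ ∉ ℤ. For nonnegative integers K₁, K₂, p with p + K₁ ≤ (k−l)/2 and p + K₂ ≤ (k+l)/2, define S(K₁,K₂,p) = (−1)^{K₁+K₂} · (Γ(K₁+p+λ)/(Γ(λ)·K₁!·p!)) · ((K₂+p)!/(K₂!·p!)) · Γ((k−l+λ+δ)/2 + 1) / ( ((k−l)/2 − p − K₁)! · ((k+l)/2 − p − K₂)! · Γ((λ+δ−k−l)/2 + K₁ + K₂ + 2p + 1) ). Then the (finite) sum of S(K₁,K₂,p) over all such triples (K₁,K₂,p) equals (−1)^{k} · Γ(1 + (k+l−λ−δ)/2) · Γ((λ−δ)/2) / ( ((k+l)/2)! · ((k−l)/2)! · Γ(1 − (λ+δ)/2) · Γ((λ−δ)/2 − (k−l)/2) ). -/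
/-!
Write `μ = (λ + δ)/2`, `ν = (λ - δ)/2` and substitute `q = K₁ + p`, `r = K₂ + p`. The sum over `p`
collapses by Vandermonde's identity `∑ₚ C(q,p) C(r,p) = C(q+r,q)`, and after writing the Gamma
quotients as generalised binomial coefficients the remaining summand is
`C(-λ,q) C(μ+a,a-q) C(-q-1,r) C(μ+q,b-r)`. Two Chu–Vandermonde summations, over `r` and then
over `q`, give `C(μ-1,b) C(a-ν,a)`, and the reflection `C(n-1-x,n) = (-1)ⁿ C(x,n)` turns each
factor back into a Gamma quotient.
-/

open Finset Real

theorem sum_range_min_reindex {M : Type*} [AddCommMonoid M] (a b : ℕ) (f : ℕ → ℕ → ℕ → M) :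
    ∑ p ∈ range (min a b + 1), ∑ i ∈ range (a - p + 1), ∑ j ∈ range (b - p + 1), f p i j =
      ∑ q ∈ range (a + 1), ∑ r ∈ range (b + 1), ∑ p ∈ range (min q r + 1), f p (q - p) (r - p) := by
  simp only [← sum_product', sum_sigma']
  refine sum_nbij' (fun x => ⟨x.2.1 + x.1, x.2.2 + x.1, x.1⟩)
    (fun y => ⟨y.2.2, y.1 - y.2.2, y.2.1 - y.2.2⟩) ?_ ?_ ?_ ?_ ?_ <;>
    simp only [mem_sigma, mem_product, mem_range, Sigma.forall, Prod.forall, Sigma.mk.injEq,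
      Nat.add_sub_cancel, heq_eq_eq, and_true, implies_true] <;> omega

theorem Nat.sum_range_min_choose_mul_choose (q r : ℕ) :
    ∑ p ∈ range (min q r + 1), q.choose p * r.choose p = (q + r).choose q := by
  calc _ = ∑ p ∈ range (q + 1), q.choose p * r.choose p := by
        refine sum_subset (range_subset_range.2 (by omega)) fun p hp hpr => ?_
        rw [mem_range] at hp hpr
        rw [Nat.choose_eq_zero_of_lt (show r < p by omega), mul_zero]
    _ = ∑ ij ∈ antidiagonal q, q.choose ij.2 * r.choose ij.2 := by
        rw [← Nat.sum_antidiagonal_swap, Nat.sum_antidiagonal_eq_sum_range_succ_mk]; rfl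
    _ = (q + r).choose q := by
        rw [add_choose_eq]
        refine sum_congr rfl fun ij hij => ?_
        rw [Nat.choose_symm_of_eq_add (mem_antidiagonal.1 hij).symm]

namespace Ring

variable {R : Type*} [CommRing R] [BinomialRing R]

theorem choose_natCast_sub_one_sub (x : R) (n : ℕ) :
    choose ((n : R) - 1 - x) n = (-1) ^ n * choose x n := by
  rw [show (n : R) - 1 - x = -(x + 1 - n) by ring, choose_neg, show x + 1 - n + n - 1 = x by ring,
    Units.smul_def, Int.coe_negOnePow_natCast, zsmul_eq_mul, Int.cast_pow, Int.cast_neg,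
    Int.cast_one]

theorem sum_range_choose_mul_choose (x y : R) (n : ℕ) :
    ∑ i ∈ range (n + 1), choose x i * choose y (n - i) = choose (x + y) n := by
  rw [add_choose_eq n (Commute.all x y), Nat.sum_antidiagonal_eq_sum_range_succ_mk]

end Ring

namespace Real

theorem Gamma_add_nat_eq_factorial_mul_choose {y : ℝ} (hy : ∀ m : ℕ, y ≠ -m) (n : ℕ) :
    Gamma (y + n) = n.factorial * Ring.choose (y + n - 1) n * Gamma y := by
  induction n with
  | zero => simp
  | succ n ih =>
    have hyn : y + n ≠ 0 := fun h => hy n (by linarith)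
    have hchoose : ((n + 1 : ℕ) : ℝ) * Ring.choose (y + n) (n + 1) =
        (y + n) * Ring.choose (y + n - 1) n := by
      simpa [Ring.choose_one_right] using Ring.choose_smul_choose (y + n) (Nat.le_add_left 1 n)
    push_cast at hchoose ⊢
    rw [← add_assoc, Gamma_add_one hyn, ih, Nat.factorial_succ, add_sub_cancel_right]
    push_cast
    linear_combination -(n.factorial : ℝ) * Gamma y * hchoose

theorem Gamma_eq_factorial_mul_choose_mul_Gamma {x y : ℝ} (n : ℕ) (hy : ∀ m : ℕ, y ≠ -m)
    (hxy : x = y + n) : Gamma x = n.factorial * Ring.choose (x - 1) n * Gamma y := by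
  subst hxy
  exact Gamma_add_nat_eq_factorial_mul_choose hy n

theorem Gamma_natCast_sub_div {z : ℝ} (hz : ∀ m : ℕ, z ≠ m) (n : ℕ) :
    Gamma (n - z) / (n.factorial * Gamma (-z)) = (-1) ^ n * Ring.choose z n := by
  have hy : ∀ m : ℕ, -z ≠ -m := fun m h => hz m (neg_injective h)
  rw [show (n : ℝ) - z = -z + n by ring, Gamma_add_nat_eq_factorial_mul_choose hy,
    show -z + n - 1 = (n : ℝ) - 1 - z by ring, Ring.choose_natCast_sub_one_sub]
  field_simp [Gamma_ne_zero hy]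

end Real

/-- The summand `S(K₁,K₂,p)` with `μ = (λ + δ)/2`, so that `(k - l + λ + δ)/2 = a + μ` and
`(λ + δ - k - l)/2 = μ - b`. -/
noncomputable def tripleSumTerm (a b : ℕ) (lam μ : ℝ) (p K₁ K₂ : ℕ) : ℝ :=
  (-1 : ℝ) ^ (K₁ + K₂) *
    (Gamma ((K₁ : ℝ) + (p : ℝ) + lam) / (Gamma lam * (K₁.factorial : ℝ) * (p.factorial : ℝ))) *
    (((K₂ + p).factorial : ℝ) / ((K₂.factorial : ℝ) * (p.factorial : ℝ))) *
    Gamma ((a : ℝ) + μ + 1) /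
    (((a - p - K₁).factorial : ℝ) * ((b - p - K₂).factorial : ℝ) *
      Gamma (μ - b + (K₁ : ℝ) + (K₂ : ℝ) + 2 * (p : ℝ) + 1))

theorem tripleSumTerm_sub_sub {a b p q r : ℕ} {lam μ : ℝ} (hlam : ∀ m : ℕ, lam ≠ -m)
    (hμ : ∀ t : ℤ, μ ≠ t) (hpq : p ≤ q) (hqa : q ≤ a) (hpr : p ≤ r) (hrb : r ≤ b) :
    tripleSumTerm a b lam μ p (q - p) (r - p) = (q.choose p * r.choose p : ℕ) *
      ((-1) ^ r * (Ring.choose (-lam) q * Ring.choose (μ + a) (a - q) *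
        Ring.choose (μ + q) (b - r))) := by
  obtain ⟨i, rfl⟩ := Nat.exists_eq_add_of_le hpq
  obtain ⟨j, rfl⟩ := Nat.exists_eq_add_of_le hpr
  obtain ⟨s, rfl⟩ := Nat.exists_eq_add_of_le hqa
  obtain ⟨t, rfl⟩ := Nat.exists_eq_add_of_le hrb
  simp only [tripleSumTerm, Nat.add_sub_cancel_left, Nat.sub_sub]
  push_cast
  have hΓq := Gamma_eq_factorial_mul_choose_mul_Gamma (x := i + p + lam) (p + i) hlam
    (by push_cast; ring)
  have hΓa := Gamma_eq_factorial_mul_choose_mul_Gamma (x := p + i + s + μ + 1)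
    (y := μ + (p + i) + 1) s (fun m h => hμ (-m - (p + i) - 1) (by push_cast; linarith))
    (by ring)
  have hΓb := Gamma_eq_factorial_mul_choose_mul_Gamma (x := μ + (p + i) + 1)
    (y := μ - (p + j + t) + i + j + 2 * p + 1) t
    (fun m h => hμ (-m + t - i - p - 1) (by push_cast; linarith)) (by ring)
  have hrefl := Ring.choose_natCast_sub_one_sub (i + p + lam - 1 : ℝ) (p + i)
  rw [show ((p + i : ℕ) : ℝ) - 1 - (i + p + lam - 1) = -lam by push_cast; ring] at hrefl
  rw [show (p : ℝ) + i + s + μ + 1 - 1 = μ + (p + i + s) by ring] at hΓa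
  rw [show μ + (p + i : ℝ) + 1 - 1 = μ + (p + i) by ring] at hΓb
  have hfi := Nat.choose_mul_factorial_mul_factorial (Nat.le_add_right p i)
  have hfj := Nat.choose_mul_factorial_mul_factorial (Nat.le_add_right p j)
  rw [Nat.add_sub_cancel_left] at hfi hfj
  have hsign : (-1 : ℝ) ^ (p + j) * (-1) ^ (p + i) = (-1) ^ (i + j) := by
    rw [← pow_add, show p + j + (p + i) = i + j + 2 * p by ring, pow_add, pow_mul]; norm_num
  rw [hΓq, hΓa, hΓb, hrefl, add_comm j p, ← hfi, ← hfj]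
  have hΓ : Gamma (μ - (p + j + t) + i + j + 2 * p + 1) ≠ 0 :=
    Gamma_ne_zero (fun m h => hμ (-m + t - i - p - 1) (by push_cast; linarith))
  generalize Gamma (μ - (p + j + t) + i + j + 2 * p + 1) = G at hΓ ⊢
  have hΓlam : Gamma lam ≠ 0 := Gamma_ne_zero hlam
  push_cast
  field_simp
  rw [← hsign]
  ring

theorem sum_tripleSumTerm (a b : ℕ) {lam μ : ℝ} (hlam : ∀ m : ℕ, lam ≠ -m)
    (hμ : ∀ t : ℤ, μ ≠ t) :
    ∑ p ∈ range (min a b + 1), ∑ K₁ ∈ range (a - p + 1), ∑ K₂ ∈ range (b - p + 1),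
      tripleSumTerm a b lam μ p K₁ K₂ = Ring.choose (μ - 1) b * Ring.choose (μ + a - lam) a := by
  rw [sum_range_min_reindex]
  calc _ = ∑ q ∈ range (a + 1), ∑ r ∈ range (b + 1),
        Ring.choose (-lam) q * Ring.choose (μ + a) (a - q) *
          (Ring.choose (-(q + 1) : ℝ) r * Ring.choose (μ + q) (b - r)) := by
        refine sum_congr rfl fun q hq => sum_congr rfl fun r hr => ?_
        rw [mem_range_succ_iff] at hq hr
        have hneg : Ring.choose (-(q + 1) : ℝ) r = (-1) ^ r * (q + r).choose q := by
          rw [show (-(q + 1) : ℝ) = r - 1 - ((q + r : ℕ) : ℝ) by push_cast; ring,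
            Ring.choose_natCast_sub_one_sub, Ring.choose_natCast, Nat.choose_symm_add]
        have hterm : ∀ p ∈ range (min q r + 1), tripleSumTerm a b lam μ p (q - p) (r - p) =
            (q.choose p * r.choose p : ℕ) * ((-1) ^ r * (Ring.choose (-lam) q *
              Ring.choose (μ + a) (a - q) * Ring.choose (μ + q) (b - r))) := fun p hp =>
          have hpqr := le_min_iff.1 (mem_range_succ_iff.1 hp)
          tripleSumTerm_sub_sub hlam hμ hpqr.1 hq hpqr.2 hr
        rw [sum_congr rfl hterm, ← sum_mul, ← Nat.cast_sum, Nat.sum_range_min_choose_mul_choose,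
          hneg]
        ring
    _ = ∑ q ∈ range (a + 1), Ring.choose (-lam) q * Ring.choose (μ + a) (a - q) *
          Ring.choose (μ - 1) b := by
        refine sum_congr rfl fun q _ => ?_
        rw [← mul_sum, Ring.sum_range_choose_mul_choose,
          show -(q + 1 : ℝ) + (μ + q) = μ - 1 by ring]
    _ = Ring.choose (μ - 1) b * Ring.choose (μ + a - lam) a := by
        rw [← sum_mul, Ring.sum_range_choose_mul_choose, mul_comm,
          show -lam + (μ + a) = μ + a - lam by ring]

theorem choose_mul_choose_eq_Gamma_div (a b : ℕ) {μ ν : ℝ} (hμ : ∀ m : ℕ, μ - 1 ≠ m)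
    (hν : ∀ m : ℕ, a - ν ≠ m) :
    Ring.choose (μ - 1) b * Ring.choose (a - ν) a =
      (-1) ^ (a + b) * Gamma (1 + b - μ) * Gamma ν /
        (b.factorial * a.factorial * Gamma (1 - μ) * Gamma (ν - a)) := by
  have hB := Gamma_natCast_sub_div hμ b
  have hA := Gamma_natCast_sub_div hν a
  rw [show (b : ℝ) - (μ - 1) = 1 + b - μ by ring, neg_sub] at hB
  rw [sub_sub_cancel, neg_sub] at hA
  have hsq : ∀ n : ℕ, (-1 : ℝ) ^ n * (-1) ^ n = 1 := fun n => by rw [← mul_pow]; norm_num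
  calc _ = (-1) ^ (a + b) * (Gamma (1 + b - μ) / (b.factorial * Gamma (1 - μ))) *
        (Gamma ν / (a.factorial * Gamma (ν - a))) := by
        rw [hA, hB]
        linear_combination (-(Ring.choose (μ - 1) b * Ring.choose (a - ν) a)) *
          (hsq a + (-1) ^ a * (-1) ^ a * hsq b)
    _ = _ := by ring

theorem su21_triple_sum_identity_general (k l δ : ℤ)
    (hkl : k % 2 = l % 2) (lam : ℝ) (hlamZ : ∀ t : ℤ, lam ≠ t)
    (a b : ℕ) (ha : (a : ℤ) = (k - l) / 2) (hb : (b : ℤ) = (k + l) / 2) :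
    (∑ p ∈ Finset.range (min a b + 1), ∑ K₁ ∈ Finset.range (a - p + 1),
        ∑ K₂ ∈ Finset.range (b - p + 1),
        (-1 : ℝ) ^ (K₁ + K₂) *
          (Real.Gamma ((K₁ : ℝ) + (p : ℝ) + lam) /
            (Real.Gamma lam * (K₁.factorial : ℝ) * (p.factorial : ℝ))) *
          (((K₂ + p).factorial : ℝ) / ((K₂.factorial : ℝ) * (p.factorial : ℝ))) *
          Real.Gamma (((k : ℝ) - (l : ℝ) + lam + (δ : ℝ)) / 2 + 1) /
          (((a - p - K₁).factorial : ℝ) * ((b - p - K₂).factorial : ℝ) *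
            Real.Gamma ((lam + (δ : ℝ) - (k : ℝ) - (l : ℝ)) / 2 +
              (K₁ : ℝ) + (K₂ : ℝ) + 2 * (p : ℝ) + 1))) =
      (-1 : ℝ) ^ k *
        Real.Gamma (1 + ((k : ℝ) + (l : ℝ) - lam - (δ : ℝ)) / 2) *
        Real.Gamma ((lam - (δ : ℝ)) / 2) /
        ((b.factorial : ℝ) * (a.factorial : ℝ) * Real.Gamma (1 - (lam + (δ : ℝ)) / 2) *
          Real.Gamma ((lam - (δ : ℝ)) / 2 - ((k : ℝ) - (l : ℝ)) / 2)) := by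
  have hk : k = (a + b : ℕ) := by push_cast; omega
  have hkl_sub : (k : ℝ) - l = 2 * a := by exact_mod_cast (show k - l = 2 * a by omega)
  have hkl_add : (k : ℝ) + l = 2 * b := by exact_mod_cast (show k + l = 2 * b by omega)
  set μ := (lam + δ) / 2 with hμ_def
  set ν := (lam - δ) / 2 with hν_def
  have hlam : ∀ m : ℕ, lam ≠ -m := fun m h => hlamZ (-m) (by push_cast; linarith)
  have hμ : ∀ t : ℤ, μ ≠ t := fun t h => hlamZ (2 * t - δ) (by push_cast; linarith)
  have hν : ∀ t : ℤ, ν ≠ t := fun t h => hlamZ (2 * t + δ) (by push_cast; linarith)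
  calc _ = ∑ p ∈ range (min a b + 1), ∑ K₁ ∈ range (a - p + 1), ∑ K₂ ∈ range (b - p + 1),
        tripleSumTerm a b lam μ p K₁ K₂ := by
        simp only [tripleSumTerm, show ((k : ℝ) - l + lam + δ) / 2 + 1 = a + μ + 1 by linarith,
          show (lam + δ - k - l) / 2 = μ - b by linarith]
    _ = Ring.choose (μ - 1) b * Ring.choose (a - ν) a := by
        rw [sum_tripleSumTerm a b hlam hμ, show μ + a - lam = a - ν by linarith]
    _ = _ := by
        rw [choose_mul_choose_eq_Gamma_div a b (fun m h => hμ (m + 1) (by push_cast; linarith))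
            (fun m h => hν (a - m) (by push_cast; linarith)),
          show (-1 : ℝ) ^ k = (-1) ^ (a + b) by rw [hk, zpow_natCast],
          show 1 + b - μ = 1 + (k + l - lam - δ) / 2 by linarith,
          show ν - a = ν - (k - l) / 2 by linarith]

/-- The constant-term/binomial identity (formulas (5.16)–(5.21) of the paper) reducing the
triple sum appearing in the `SU(2,1)` intertwining-operator computation to a ratio of
Gamma functions. Here `a = (k−l)/2` and `b = (k+l)/2` are nonnegative integers. -/
theorem su21_triple_sum_identity (k l δ : ℤ) (hk : 0 ≤ k) (hl : |l| ≤ k)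
    (hkl : k % 2 = l % 2) (lam : ℝ) (hlam : 0 < lam) (hlamZ : ∀ t : ℤ, lam ≠ t)
    (a b : ℕ) (ha : (a : ℤ) = (k - l) / 2) (hb : (b : ℤ) = (k + l) / 2) :
    (∑ p ∈ Finset.range (min a b + 1), ∑ K₁ ∈ Finset.range (a - p + 1),
        ∑ K₂ ∈ Finset.range (b - p + 1),
        (-1 : ℝ) ^ (K₁ + K₂) *
          (Real.Gamma ((K₁ : ℝ) + (p : ℝ) + lam) /
            (Real.Gamma lam * (K₁.factorial : ℝ) * (p.factorial : ℝ))) *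
          (((K₂ + p).factorial : ℝ) / ((K₂.factorial : ℝ) * (p.factorial : ℝ))) *
          Real.Gamma (((k : ℝ) - (l : ℝ) + lam + (δ : ℝ)) / 2 + 1) /
          (((a - p - K₁).factorial : ℝ) * ((b - p - K₂).factorial : ℝ) *
            Real.Gamma ((lam + (δ : ℝ) - (k : ℝ) - (l : ℝ)) / 2 +
              (K₁ : ℝ) + (K₂ : ℝ) + 2 * (p : ℝ) + 1))) =
      (-1 : ℝ) ^ k *
        Real.Gamma (1 + ((k : ℝ) + (l : ℝ) - lam - (δ : ℝ)) / 2) *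
        Real.Gamma ((lam - (δ : ℝ)) / 2) /
        ((b.factorial : ℝ) * (a.factorial : ℝ) * Real.Gamma (1 - (lam + (δ : ℝ)) / 2) *
          Real.Gamma ((lam - (δ : ℝ)) / 2 - ((k : ℝ) - (l : ℝ)) / 2)) :=
  su21_triple_sum_identity_general k l δ hkl lam hlamZ a b ha hb
end

section
/- Let j ≥ 0 be a half-integer and m₂ a half-integer with j+m₂ ∈ ℤ and −j ≤ m₂ ≤ j, and let n, λ be real numbers. For each sign ε ∈ {+1, −1} and each j₀ ∈ {−1/2, +1/2}: √((j−εm₂)(j+εm₂+1)) · c(j₀, m₂+ε, −ε/2) − (1/2)·(−ε(n+m₂) − λ − 2) · c(j₀, m₂, ε/2) = (1/(2√(2j+1))) · q_{j₀,ε} · κ_{j₀,ε}, where c(−1/2, m, −1/2) = √((j+m)/(2j+1)), c(−1/2, m, +1/2) = −√((j−m)/(2j+1)), c(+1/2, m, −1/2) = √((j−m+1)/(2j+1)), c(+1/2, m, +1/2) = √((j+m+1)/(2j+1)); q_{−1/2,−} = √(j+m₂), q_{−1/2,+} = √(j−m₂), q_{+1/2,−} = √(j−m₂+1), q_{+1/2,+}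 = √(j+m₂+1); and κ_{−1/2,−} = −(2j−m₂+n−λ), κ_{−1/2,+} = 2j+m₂−n−λ, κ_{+1/2,−} = 2j+m₂−n+λ+2, κ_{+1/2,+} = 2j−m₂+n+λ+2. -/
open Classical in
/-- The Clebsch–Gordan coefficients `c(j₀, m, m₀)` for the tensor product of the
`SU(2)`-representations of spins `j` and `1/2` (Table 1), for `j₀, m₀ ∈ {−1/2, +1/2}`. -/
noncomputable def cgHalf (j j₀ m m₀ : ℝ) : ℝ :=
  if j₀ = -(1 / 2) then
    if m₀ = -(1 / 2) then Real.sqrt ((j + m) / (2 * j + 1))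
    else -Real.sqrt ((j - m) / (2 * j + 1))
  else
    if m₀ = -(1 / 2) then Real.sqrt ((j - m + 1) / (2 * j + 1))
    else Real.sqrt ((j + m + 1) / (2 * j + 1))

open Classical in
/-- The coefficients `q_{j₀,ε}` of Proposition 4.1, for `j₀ ∈ {−1/2, +1/2}` and
`ε ∈ {+1, −1}`. -/
noncomputable def qCoeff (j m₂ j₀ ε : ℝ) : ℝ :=
  if j₀ = -(1 / 2) then
    if ε = 1 then Real.sqrt (j - m₂) else Real.sqrt (j + m₂)
  else
    if ε = 1 then Real.sqrt (j + m₂ + 1) else Real.sqrt (j - m₂ + 1)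

open Classical in
/-- The coefficients `κ_{j₀,ε}` of Proposition 4.1, for `j₀ ∈ {−1/2, +1/2}` and
`ε ∈ {+1, −1}`. -/
noncomputable def kappaCoeff (j m₂ n lam j₀ ε : ℝ) : ℝ :=
  if j₀ = -(1 / 2) then
    if ε = 1 then 2 * j + m₂ - n - lam else -(2 * j - m₂ + n - lam)
  else
    if ε = 1 then 2 * j - m₂ + n + lam + 2 else 2 * j + m₂ - n + lam + 2
/-!
With `d = 2j + 1`, each Clebsch–Gordan coefficient occurring in the identity is `√(x / d)` (up to
sign) for `x` one of the two factors of `(j − εm₂)(j + εm₂ + 1)`, and the one multiplying the square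
root is the other factor. So `√(xy) · √(y / d) = y · √(x / d)` turns the left side into a multiple of
`√(x / d) = q_{j₀,ε} / √d`, and the remaining coefficients agree linearly.
-/

theorem sqrt_mul_mul_sqrt_div {x y : ℝ} (hx : 0 ≤ x) (hy : 0 ≤ y) (d : ℝ) :
    √(x * y) * √(y / d) = y * √(x / d) := by
  rw [Real.sqrt_mul hx, Real.sqrt_div hy, Real.sqrt_div hx]
  calc √x * √y * (√y / √d) = (√y * √y) * (√x / √d) := by ring
    _ = y * (√x / √d) := by rw [Real.mul_self_sqrt hy]

theorem su21_coefficient_identity_general (j m₂ n lam ε j₀ : ℝ)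
    (hm₂l : -j ≤ m₂) (hm₂u : m₂ ≤ j)
    (hε : ε = 1 ∨ ε = -1) (hj₀ : j₀ = -(1 / 2) ∨ j₀ = 1 / 2) :
    Real.sqrt ((j - ε * m₂) * (j + ε * m₂ + 1)) * cgHalf j j₀ (m₂ + ε) (-ε / 2) -
        (1 / 2) * (-ε * (n + m₂) - lam - 2) * cgHalf j j₀ m₂ (ε / 2) =
      1 / (2 * Real.sqrt (2 * j + 1)) * (qCoeff j m₂ j₀ ε * kappaCoeff j m₂ n lam j₀ ε) := by
  have hd : 0 ≤ 2 * j + 1 := by linarith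
  have hjm : 0 ≤ j - m₂ := by linarith
  have hjp : 0 ≤ j + m₂ := by linarith
  rcases hε with rfl | rfl <;> rcases hj₀ with rfl | rfl <;>
    simp only [cgHalf, qCoeff, kappaCoeff] <;> norm_num
  · rw [show j + (m₂ + 1) = j + m₂ + 1 by ring,
      sqrt_mul_mul_sqrt_div hjm (by linarith), Real.sqrt_div' _ hd]
    ring
  · rw [show j - (m₂ + 1) + 1 = j - m₂ by ring, mul_comm (j - m₂),
      sqrt_mul_mul_sqrt_div (by linarith) hjm, Real.sqrt_div' _ hd]
    ring
  · rw [show j + -m₂ + 1 = j - m₂ + 1 by ring, show j - (m₂ + -1) = j - m₂ + 1 by ring,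
      sqrt_mul_mul_sqrt_div hjp (by linarith), Real.sqrt_div' _ hd]
    ring
  · rw [show j + -m₂ + 1 = j - m₂ + 1 by ring, show j + (m₂ + -1) + 1 = j + m₂ by ring,
      mul_comm (j + m₂), sqrt_mul_mul_sqrt_div (by linarith) hjp, Real.sqrt_div' _ hd]
    ring

/-- The scalar identity at the computational core of Proposition 4.1: for each sign
`ε ∈ {+1, −1}` and each `j₀ ∈ {−1/2, +1/2}`,
`√((j−εm₂)(j+εm₂+1)) c(j₀, m₂+ε, −ε/2) − (1/2)(−ε(n+m₂)−λ−2) c(j₀, m₂, ε/2)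
  = (1/(2√(2j+1))) q_{j₀,ε} κ_{j₀,ε}`. -/
theorem su21_coefficient_identity (j m₂ n lam ε j₀ : ℝ)
    (hj : HalfInt j) (hj0 : 0 ≤ j) (hm₂ : HalfInt m₂)
    (hjm₂ : ∃ a : ℤ, j + m₂ = a) (hm₂l : -j ≤ m₂) (hm₂u : m₂ ≤ j)
    (hε : ε = 1 ∨ ε = -1) (hj₀ : j₀ = -(1 / 2) ∨ j₀ = 1 / 2) :
    Real.sqrt ((j - ε * m₂) * (j + ε * m₂ + 1)) * cgHalf j j₀ (m₂ + ε) (-ε / 2) -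
        (1 / 2) * (-ε * (n + m₂) - lam - 2) * cgHalf j j₀ m₂ (ε / 2) =
      1 / (2 * Real.sqrt (2 * j + 1)) * (qCoeff j m₂ j₀ ε * kappaCoeff j m₂ n lam j₀ ε) :=
  su21_coefficient_identity_general j m₂ n lam ε j₀ hm₂l hm₂u hε hj₀
end

section
/- Let j ≥ 0 be a half-integer, m₁, m₂ half-integers with j+m₁, j+m₂ ∈ ℤ and −j ≤ m₁, m₂ ≤ j, and n a real number. Then for all (ζ,ψ,θ,φ) ∈ ℝ⁴: Σ_{m₃} W^{(j,n)}_{m₁,m₃}(ζ,ψ,θ,φ) · conj( W^{(j,n)}_{m₂,m₃}(ζ,ψ,θ,φ) ) = 1 if m₁ = m₂ and = 0 otherwise, where the sum runs over all half-integers m₃ with −j ≤ m₃ ≤ j and j+m₃ ∈ ℤ. -/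
/-- The little Wigner d-function `d^j_{m₁,m₂}(θ)`, defined as the finite sum
`Σ_p (−1)^{m₂−m₁+p} / ((j+m₁−p)!·p!·(m₂−m₁+p)!·(j−m₂−p)!) · sin(θ/2)^{m₂−m₁+2p} ·
cos(θ/2)^{2j+m₁−m₂−2p}` over integers `p` with `max(0, m₁−m₂) ≤ p ≤ min(j−m₂, j+m₁)`
(the factorials of the nonnegative integers appearing are expressed via the Gamma
function, `x! = Γ(x+1)`). -/
noncomputable def wignerd (j m₁ m₂ θ : ℝ) : ℝ :=
  ∑ p ∈ Finset.Icc (max 0 ⌈m₁ - m₂⌉) ⌊min (j - m₂) (j + m₁)⌋,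
    (-1 : ℝ) ^ (⌈m₂ - m₁⌉ + p) /
      (Real.Gamma (j + m₁ - (p : ℝ) + 1) * Real.Gamma ((p : ℝ) + 1) *
        Real.Gamma (m₂ - m₁ + (p : ℝ) + 1) * Real.Gamma (j - m₂ - (p : ℝ) + 1)) *
      Real.sin (θ / 2) ^ (⌈m₂ - m₁⌉ + 2 * p) *
      Real.cos (θ / 2) ^ (⌊2 * j + m₁ - m₂⌋ - 2 * p)

open Classical in
/-- The Wigner D-function `W^{(j,n)}_{m₁,m₂}(ζ,ψ,θ,φ)`, with the convention that it is `0`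
if `m₁` or `m₂` lies outside `[−j, j]` or `j ± m₁ ∉ ℤ` or `j ± m₂ ∉ ℤ`. -/
noncomputable def WignerD (j n m₁ m₂ : ℝ) (ζ ψ θ φ : ℝ) : ℂ :=
  if (-j ≤ m₁ ∧ m₁ ≤ j) ∧ (-j ≤ m₂ ∧ m₂ ≤ j) ∧
      (∃ a : ℤ, j + m₁ = a) ∧ (∃ a : ℤ, j - m₁ = a) ∧
      (∃ a : ℤ, j + m₂ = a) ∧ (∃ a : ℤ, j - m₂ = a) then
    ((Real.sqrt (Real.Gamma (j + m₁ + 1) * Real.Gamma (j - m₁ + 1)) *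
        Real.sqrt (Real.Gamma (j + m₂ + 1) * Real.Gamma (j - m₂ + 1)) : ℝ) : ℂ) *
      Complex.exp (Complex.I * n * ζ) *
      Complex.exp (Complex.I * (m₁ * ψ + m₂ * φ)) * ((wignerd j m₁ m₂ θ : ℝ) : ℂ)
  else 0


open Polynomial in
noncomputable def Qp (c s : ℝ) (N t : ℕ) : Polynomial ℝ :=
  (C c * X - C s) ^ t * (C s * X + C c) ^ (N - t)

section Aux
open Polynomial

lemma coeff_linear_pow (c d : ℝ) (t k : ℕ) :
    ((C c * X + C d) ^ t).coeff k = t.choose k * c ^ k * d ^ (t - k) := by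
  rcases le_or_gt k t with hk | hk
  · rw [add_pow, finset_sum_coeff]
    have hterm : ∀ i ∈ Finset.range (t + 1),
        ((C c * X) ^ i * C d ^ (t - i) * (t.choose i : Polynomial ℝ)).coeff k
          = if i = k then (t.choose k : ℝ) * c ^ k * d ^ (t - k) else 0 := by
      intro i _
      have h1 : (C c * X) ^ i * C d ^ (t - i) * (t.choose i : Polynomial ℝ)
          = C ((t.choose i : ℝ) * c ^ i * d ^ (t - i)) * X ^ i := by
        rw [mul_pow, ← C_pow, ← C_pow, ← C_eq_natCast, C_mul, C_mul]
        ring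
      rw [h1, coeff_C_mul, coeff_X_pow]
      by_cases h : i = k
      · subst h; simp
      · rw [if_neg (fun hc => h hc.symm), mul_zero, if_neg h]
    rw [Finset.sum_congr rfl hterm, Finset.sum_ite_eq' (Finset.range (t + 1)) k]
    rw [if_pos (Finset.mem_range.2 (Nat.lt_succ_of_le hk))]
  · rw [Nat.choose_eq_zero_of_lt hk, Nat.cast_zero, zero_mul, zero_mul]
    apply coeff_eq_zero_of_natDegree_lt
    calc ((C c * X + C d) ^ t).natDegree ≤ t * (C c * X + C d).natDegree := natDegree_pow_le
      _ ≤ t * 1 := Nat.mul_le_mul_left t (natDegree_linear_le)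
      _ ≤ t := by omega
      _ < k := hk

lemma poly_orth (c s : ℝ) (hcs : s ^ 2 + c ^ 2 = 1) (N a₁ a₂ : ℕ) (h2 : a₂ ≤ N) :
    ∑ t ∈ Finset.range (N + 1), (N.choose t : ℝ) *
        ((Qp c s N t).coeff a₁ * (Qp c s N t).coeff a₂) =
      if a₁ = a₂ then (N.choose a₁ : ℝ) else 0 := by
  set u : Polynomial ℝ := C c * X - C s with hu
  set v : Polynomial ℝ := C s * X + C c with hv
  set A : Polynomial (Polynomial ℝ) := Polynomial.C u * u.map (C : ℝ →+* Polynomial ℝ)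
    with hA
  set B : Polynomial (Polynomial ℝ) := Polynomial.C v * v.map (C : ℝ →+* Polynomial ℝ)
    with hB
  have hmapu : u.map (C : ℝ →+* Polynomial ℝ)
      = Polynomial.C (Polynomial.C c) * X - Polynomial.C (Polynomial.C s) := by
    simp [hu]
  have hmapv : v.map (C : ℝ →+* Polynomial ℝ)
      = Polynomial.C (Polynomial.C s) * X + Polynomial.C (Polynomial.C c) := by
    simp [hv]
  have hAB : A + B = Polynomial.C (X : Polynomial ℝ) * X + 1 := by
    have h1 : (Polynomial.C (Polynomial.C s) : Polynomial (Polynomial ℝ)) ^ 2 +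
        (Polynomial.C (Polynomial.C c) : Polynomial (Polynomial ℝ)) ^ 2 = 1 := by
      rw [← map_pow, ← map_pow, ← map_pow, ← map_pow, ← map_add, ← map_add, hcs,
        map_one, map_one]
    rw [hA, hB, hmapu, hmapv, hu, hv]
    simp only [map_sub, map_add, map_mul]
    linear_combination (Polynomial.C (X : Polynomial ℝ)
      * (X : Polynomial (Polynomial ℝ)) + 1) * h1
  have hABN : (((A + B) ^ N).coeff a₂).coeff a₁
      = (((Polynomial.C (X : Polynomial ℝ) * X + 1) ^ N).coeff a₂).coeff a₁ := by
    rw [hAB]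
  rw [(Commute.all A B).add_pow N] at hABN
  have hA2 : ∀ t : ℕ, A ^ t * B ^ (N - t) =
      Polynomial.C (Qp c s N t) * (Qp c s N t).map (C : ℝ →+* Polynomial ℝ) := by
    intro t
    rw [hA, hB, mul_pow, mul_pow, mul_mul_mul_comm, ← map_pow, ← map_pow, ← map_mul,
      ← Polynomial.map_pow, ← Polynomial.map_pow, ← Polynomial.map_mul]
    rfl
  have hcastT : ∀ n : ℕ, ((n : ℕ) : Polynomial (Polynomial ℝ))
      = Polynomial.C (Polynomial.C (n : ℝ)) := by
    intro n; push_cast; rfl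
  have hL : ∀ t : ℕ,
      (((A ^ t * B ^ (N - t) * ((N.choose t : ℕ) : Polynomial (Polynomial ℝ))).coeff a₂).coeff a₁)
        = (N.choose t : ℝ) * ((Qp c s N t).coeff a₁ * (Qp c s N t).coeff a₂) := by
    intro t
    rw [hA2, hcastT, mul_assoc, coeff_C_mul, coeff_mul_C, coeff_map, ← C_mul, coeff_mul_C]
    ring
  have hR : (((Polynomial.C (X : Polynomial ℝ) * X + 1) ^ N).coeff a₂).coeff a₁
      = if a₁ = a₂ then (N.choose a₁ : ℝ) else 0 := by
    rw [(Commute.all _ _).add_pow N, finset_sum_coeff]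
    have hterm : ∀ k ∈ Finset.range (N + 1),
        ((Polynomial.C (X : Polynomial ℝ) * X) ^ k * (1 : Polynomial (Polynomial ℝ)) ^ (N - k)
            * ((N.choose k : ℕ) : Polynomial (Polynomial ℝ))).coeff a₂
          = if k = a₂ then (X : Polynomial ℝ) ^ a₂ * Polynomial.C ((N.choose a₂ : ℝ)) else 0 := by
      intro k _
      rw [one_pow, mul_one, hcastT, mul_pow, ← map_pow, mul_assoc, coeff_C_mul, coeff_mul_C,
        coeff_X_pow]
      by_cases h : k = a₂
      · subst h; simp
      · simp [h, Ne.symm h]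
    rw [Finset.sum_congr rfl hterm, Finset.sum_ite_eq' (Finset.range (N + 1)) a₂,
      if_pos (Finset.mem_range.2 (Nat.lt_succ_of_le h2)), coeff_mul_C, coeff_X_pow]
    by_cases h : a₁ = a₂
    · subst h; simp
    · rw [if_neg h, if_neg (fun hc => h hc), zero_mul]
  rw [finset_sum_coeff, finset_sum_coeff, hR] at hABN
  rw [← hABN]
  exact Finset.sum_congr rfl (fun t _ => (hL t).symm)

lemma Gamma_int_nonpos_zero (z : ℤ) (hz : z ≤ 0) : Real.Gamma ((z : ℤ) : ℝ) = 0 := by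
  rw [show z = -((-z).toNat : ℤ) by omega]
  rw [show (((-((-z).toNat : ℤ)) : ℤ) : ℝ) = -(((-z).toNat : ℕ) : ℝ) by push_cast; ring]
  exact Real.Gamma_neg_nat_eq_zero _

lemma wignerd_eq_coeff (j m₁ m₂ θ : ℝ) (N a t : ℕ) (ha : j + m₁ = a) (ht : j + m₂ = t)
    (hN : 2 * j = N) (haN : a ≤ N) (htN : t ≤ N) :
    (t.factorial * (N - t).factorial : ℝ) * wignerd j m₁ m₂ θ =
      (Qp (Real.cos (θ / 2)) (Real.sin (θ / 2)) N t).coeff a := by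
  set c := Real.cos (θ / 2)
  set s := Real.sin (θ / 2)
  -- clean up the wignerd sum
  have hm12 : m₁ - m₂ = (((a : ℤ) - t : ℤ) : ℝ) := by push_cast; linarith
  have hm21 : m₂ - m₁ = (((t : ℤ) - a : ℤ) : ℝ) := by push_cast; linarith
  have hb1 : ⌈m₁ - m₂⌉ = (a : ℤ) - t := by rw [hm12, Int.ceil_intCast]
  have hb2 : ⌈m₂ - m₁⌉ = (t : ℤ) - a := by rw [hm21, Int.ceil_intCast]
  have hjm2 : j - m₂ = (((N : ℤ) - t : ℤ) : ℝ) := by push_cast; linarith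
  have hja : j + m₁ = (((a : ℤ) : ℤ) : ℝ) := by push_cast; linarith
  have hb3 : ⌊min (j - m₂) (j + m₁)⌋ = min ((N : ℤ) - t) (a : ℤ) := by
    rw [hjm2, hja, ← Int.cast_min, Int.floor_intCast]
  have hb4 : ⌊2 * j + m₁ - m₂⌋ = (N : ℤ) + a - t := by
    rw [show 2 * j + m₁ - m₂ = (((N : ℤ) + a - t : ℤ) : ℝ) by push_cast; linarith,
      Int.floor_intCast]
  rw [wignerd, hb1, hb2, hb3, hb4, ha, hjm2, hm21]
  -- now the sum is over `Icc (max 0 (a - t)) (min (N - t) a)` with integer data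
  set F : ℤ → ℝ := fun p =>
    (-1 : ℝ) ^ ((t : ℤ) - a + p) /
        (Real.Gamma ((a : ℝ) - p + 1) * Real.Gamma ((p : ℝ) + 1) *
          Real.Gamma ((((t : ℤ) - a : ℤ) : ℝ) + p + 1) *
          Real.Gamma ((((N : ℤ) - t : ℤ) : ℝ) - p + 1)) *
      s ^ ((t : ℤ) - a + 2 * p) * c ^ ((N : ℤ) + a - t - 2 * p) with hF
  have hsum1 : ∑ p ∈ Finset.Icc (max 0 ((a : ℤ) - t)) (min ((N : ℤ) - t) (a : ℤ)), F p
      = ∑ p ∈ Finset.Icc (0 : ℤ) (a : ℤ), F p := by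
    apply Finset.sum_subset
    · intro p hp
      simp only [Finset.mem_Icc] at hp ⊢
      omega
    · intro p hp hnp
      simp only [Finset.mem_Icc] at hp hnp
      rw [hF]
      rcases (by omega : p < (a : ℤ) - t ∨ (N : ℤ) - t < p) with h | h
      · have hz : Real.Gamma ((t : ℝ) - (a : ℝ) + (p : ℝ) + 1) = 0 := by
          rw [show (t : ℝ) - (a : ℝ) + (p : ℝ) + 1 = ((t - a + p + 1 : ℤ) : ℝ) by
            push_cast; ring]
          exact Gamma_int_nonpos_zero _ (by omega)
        simp [hz]
      · have hz : Real.Gamma ((N : ℝ) - (t : ℝ) - (p : ℝ) + 1) = 0 := by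
          rw [show (N : ℝ) - (t : ℝ) - (p : ℝ) + 1 = ((N - t - p + 1 : ℤ) : ℝ) by
            push_cast; ring]
          exact Gamma_int_nonpos_zero _ (by omega)
        simp [hz]
  have hsum2 : ∑ p ∈ Finset.Icc (0 : ℤ) (a : ℤ), F p
      = ∑ k ∈ Finset.range (a + 1), F (k : ℤ) := by
    apply Finset.sum_nbij' (i := fun (p : ℤ) => p.toNat) (j := fun (k : ℕ) => (k : ℤ))
    · intro p hp
      simp only [Finset.mem_Icc] at hp
      simp only [Finset.mem_range]
      omega
    · intro k hk
      simp only [Finset.mem_range] at hk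
      simp only [Finset.mem_Icc]
      omega
    · intro p hp
      simp only [Finset.mem_Icc] at hp
      omega
    · intro k _
      simp
    · intro p hp
      simp only [Finset.mem_Icc] at hp
      rw [Int.toNat_of_nonneg hp.1]
  rw [hsum1, hsum2, Finset.mul_sum]
  -- right-hand side
  rw [Qp, coeff_mul, Finset.Nat.sum_antidiagonal_eq_sum_range_succ_mk, ← Finset.sum_range_reflect]
  apply Finset.sum_congr rfl
  intro k hk
  have hka : k ≤ a := Nat.lt_succ_iff.mp (Finset.mem_range.mp hk)
  rw [show a + 1 - 1 - k = a - k by omega]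
  rw [sub_eq_add_neg ((C c) * X), ← C_neg, coeff_linear_pow, coeff_linear_pow]
  rw [hF]; dsimp only
  rcases (by omega : t < k ∨ ((N : ℤ) - t < ((a - k : ℕ) : ℤ)) ∨
      (k ≤ t ∧ ((a - k : ℕ) : ℤ) ≤ (N : ℤ) - t)) with h | h | h
  · have hz : Real.Gamma ((t : ℝ) - (a : ℝ) + ((a - k : ℕ) : ℝ) + 1) = 0 := by
      rw [show (t : ℝ) - (a : ℝ) + ((a - k : ℕ) : ℝ) + 1
          = ((t - a + ((a - k : ℕ) : ℤ) + 1 : ℤ) : ℝ) by push_cast; ring]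
      exact Gamma_int_nonpos_zero _ (by omega)
    rw [Nat.choose_eq_zero_of_lt h]
    simp [hz]
  · have hz : Real.Gamma ((N : ℝ) - (t : ℝ) - ((a - k : ℕ) : ℝ) + 1) = 0 := by
      rw [show (N : ℝ) - (t : ℝ) - ((a - k : ℕ) : ℝ) + 1
          = ((N - t - ((a - k : ℕ) : ℤ) + 1 : ℤ) : ℝ) by push_cast; ring]
      exact Gamma_int_nonpos_zero _ (by omega)
    rw [Nat.choose_eq_zero_of_lt (by omega : N - t < a - k)]
    simp [hz]
  · obtain ⟨hkt, hank'⟩ := h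
    have hank : a - k ≤ N - t := by omega
    rw [show (t : ℤ) - a + ((a - k : ℕ) : ℤ) = ((t - k : ℕ) : ℤ) by omega,
      show (t : ℤ) - a + 2 * ((a - k : ℕ) : ℤ) = ((t + a - 2 * k : ℕ) : ℤ) by omega,
      show (N : ℤ) + a - t - 2 * ((a - k : ℕ) : ℤ) = ((N + 2 * k - a - t : ℕ) : ℤ) by omega,
      zpow_natCast, zpow_natCast, zpow_natCast]
    rw [show (a : ℝ) - (((a - k : ℕ) : ℤ) : ℝ) + 1 = ((k : ℕ) : ℝ) + 1 by
        push_cast [Nat.cast_sub hka]; ring,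
      show ((((a - k : ℕ) : ℤ)) : ℝ) + 1 = ((a - k : ℕ) : ℝ) + 1 by push_cast; ring,
      show (((t : ℤ) - a : ℤ) : ℝ) + (((a - k : ℕ) : ℤ) : ℝ) + 1 = ((t - k : ℕ) : ℝ) + 1 by
        push_cast [Nat.cast_sub hka, Nat.cast_sub hkt]; ring,
      show (((N : ℤ) - t : ℤ) : ℝ) - (((a - k : ℕ) : ℤ) : ℝ) + 1
          = ((N - t - (a - k) : ℕ) : ℝ) + 1 by
        push_cast [Nat.cast_sub hka, Nat.cast_sub htN, Nat.cast_sub hank]; ring,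
      Real.Gamma_nat_eq_factorial, Real.Gamma_nat_eq_factorial,
      Real.Gamma_nat_eq_factorial, Real.Gamma_nat_eq_factorial]
    rw [Nat.cast_choose ℝ hkt, Nat.cast_choose ℝ hank, neg_pow,
      show t + a - 2 * k = (t - k) + (a - k) by omega, pow_add,
      show N + 2 * k - a - t = k + (N - t - (a - k)) by omega, pow_add]
    have f1 : ((k.factorial : ℕ) : ℝ) ≠ 0 := Nat.cast_ne_zero.mpr (Nat.factorial_ne_zero _)
    have f2 : (((a - k).factorial : ℕ) : ℝ) ≠ 0 := Nat.cast_ne_zero.mpr (Nat.factorial_ne_zero _)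
    have f3 : (((t - k).factorial : ℕ) : ℝ) ≠ 0 := Nat.cast_ne_zero.mpr (Nat.factorial_ne_zero _)
    have f4 : (((N - t - (a - k)).factorial : ℕ) : ℝ) ≠ 0 :=
      Nat.cast_ne_zero.mpr (Nat.factorial_ne_zero _)
    field_simp
    ring

lemma real_orth (j m₁ m₂ θ : ℝ) (N a₁ a₂ : ℕ) (ha₁ : j + m₁ = a₁) (ha₂ : j + m₂ = a₂)
    (hN : 2 * j = N) (h1 : a₁ ≤ N) (h2 : a₂ ≤ N) :
    ∑ t ∈ Finset.range (N + 1), ((t.factorial * (N - t).factorial : ℕ) : ℝ) *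
        (wignerd j m₁ (-j + t) θ * wignerd j m₂ (-j + t) θ) =
      if a₁ = a₂ then (((a₁.factorial * (N - a₁).factorial : ℕ) : ℝ))⁻¹ else 0 := by
  have hNfac : ((N.factorial : ℕ) : ℝ) ≠ 0 := Nat.cast_ne_zero.mpr (Nat.factorial_ne_zero _)
  set c := Real.cos (θ / 2) with hc
  set s := Real.sin (θ / 2) with hs
  have key := poly_orth c s (Real.sin_sq_add_cos_sq (θ / 2)) N a₁ a₂ h2
  have hterm : ∀ t ∈ Finset.range (N + 1),
      ((t.factorial * (N - t).factorial : ℕ) : ℝ) *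
          (wignerd j m₁ (-j + t) θ * wignerd j m₂ (-j + t) θ)
        = (N.choose t : ℝ) * ((Qp c s N t).coeff a₁ * (Qp c s N t).coeff a₂)
            / ((N.factorial : ℕ) : ℝ) := by
    intro t ht
    have htN : t ≤ N := Nat.lt_succ_iff.mp (Finset.mem_range.mp ht)
    have e1 := wignerd_eq_coeff j m₁ (-j + t) θ N a₁ t ha₁ (by push_cast; ring) hN h1 htN
    have e2 := wignerd_eq_coeff j m₂ (-j + t) θ N a₂ t ha₂ (by push_cast; ring) hN h2 htN
    have hfact : (N.choose t : ℝ) * (t.factorial : ℝ) * ((N - t).factorial : ℝ)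
        = (N.factorial : ℝ) := by
      exact_mod_cast congrArg (Nat.cast : ℕ → ℝ)
        (Nat.choose_mul_factorial_mul_factorial htN)
    rw [eq_div_iff hNfac, ← e1, ← e2]
    push_cast
    linear_combination (-(t.factorial : ℝ) * ((N - t).factorial : ℝ) *
      (wignerd j m₁ (-j + ↑t) θ * wignerd j m₂ (-j + ↑t) θ)) * hfact
  rw [Finset.sum_congr rfl hterm, ← Finset.sum_div, key]
  by_cases h : a₁ = a₂
  · subst h
    rw [if_pos rfl, if_pos rfl, Nat.cast_choose ℝ h1]
    have fa : ((a₁.factorial : ℕ) : ℝ) ≠ 0 := Nat.cast_ne_zero.mpr (Nat.factorial_ne_zero _)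
    have fb : (((N - a₁).factorial : ℕ) : ℝ) ≠ 0 :=
      Nat.cast_ne_zero.mpr (Nat.factorial_ne_zero _)
    push_cast
    field_simp
  · rw [if_neg h, if_neg h, zero_div]

end Aux

open Classical in
/-- The unitarity relation (3.21) for Wigner D-functions:
`Σ_{m₃} W^{(j,n)}_{m₁,m₃} · conj(W^{(j,n)}_{m₂,m₃}) = δ_{m₁,m₂}`, the sum running over all
half-integers `m₃` with `−j ≤ m₃ ≤ j` and `j + m₃ ∈ ℤ` (i.e. `m₃ = −j + t`,
`t = 0, 1, …, 2j`). -/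
theorem wignerD_unitarity (j m₁ m₂ n : ℝ) (hj : HalfInt j) (hj0 : 0 ≤ j)
    (hm₁ : HalfInt m₁) (hm₂ : HalfInt m₂)
    (hjm₁ : ∃ a : ℤ, j + m₁ = a) (hjm₂ : ∃ a : ℤ, j + m₂ = a)
    (hm₁l : -j ≤ m₁) (hm₁u : m₁ ≤ j) (hm₂l : -j ≤ m₂) (hm₂u : m₂ ≤ j)
    (ζ ψ θ φ : ℝ) :
    ∑ t ∈ Finset.range (⌊2 * j⌋.toNat + 1),
        WignerD j n m₁ (-j + t) ζ ψ θ φ *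
          (starRingEnd ℂ) (WignerD j n m₂ (-j + t) ζ ψ θ φ) =
      if m₁ = m₂ then 1 else 0 := by
  obtain ⟨kj, hkj⟩ := hj
  obtain ⟨za₁, hza₁⟩ := hjm₁
  obtain ⟨za₂, hza₂⟩ := hjm₂
  have h2jk : 2 * j = (kj : ℝ) := by rw [hkj]; ring
  have hkj0 : (0 : ℤ) ≤ kj := by exact_mod_cast (by linarith : (0 : ℝ) ≤ (kj : ℝ))
  set N : ℕ := ⌊2 * j⌋.toNat with hNdef
  have hN : 2 * j = (N : ℝ) := by
    have hfl : ⌊2 * j⌋ = kj := by rw [h2jk]; exact Int.floor_intCast _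
    rw [hNdef, hfl, h2jk]
    exact_mod_cast (Int.toNat_of_nonneg hkj0).symm
  have hza₁0 : (0 : ℤ) ≤ za₁ := by
    exact_mod_cast (by linarith : (0 : ℝ) ≤ (za₁ : ℝ))
  have hza₂0 : (0 : ℤ) ≤ za₂ := by
    exact_mod_cast (by linarith : (0 : ℝ) ≤ (za₂ : ℝ))
  set a₁ : ℕ := za₁.toNat with ha₁def
  set a₂ : ℕ := za₂.toNat with ha₂def
  have ha₁ : j + m₁ = (a₁ : ℝ) := by
    rw [hza₁]; exact_mod_cast (Int.toNat_of_nonneg hza₁0).symm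
  have ha₂ : j + m₂ = (a₂ : ℝ) := by
    rw [hza₂]; exact_mod_cast (Int.toNat_of_nonneg hza₂0).symm
  have h1N : a₁ ≤ N := by
    have : (a₁ : ℝ) ≤ (N : ℝ) := by rw [← ha₁, ← hN]; linarith
    exact_mod_cast this
  have h2N : a₂ ≤ N := by
    have : (a₂ : ℝ) ≤ (N : ℝ) := by rw [← ha₂, ← hN]; linarith
    exact_mod_cast this
  have hterm : ∀ t ∈ Finset.range (N + 1),
      WignerD j n m₁ (-j + t) ζ ψ θ φ * (starRingEnd ℂ) (WignerD j n m₂ (-j + t) ζ ψ θ φ)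
        = (((Real.sqrt ((a₁.factorial : ℝ) * ((N - a₁).factorial : ℝ)) *
              Real.sqrt ((a₂.factorial : ℝ) * ((N - a₂).factorial : ℝ)) : ℝ)) : ℂ) *
            Complex.exp (Complex.I * (((m₁ - m₂) * ψ : ℝ) : ℂ)) *
            ((((t.factorial * (N - t).factorial : ℕ) : ℝ) *
              (wignerd j m₁ (-j + t) θ * wignerd j m₂ (-j + t) θ) : ℝ) : ℂ) := by
    intro t ht
    have htN : t ≤ N := Nat.lt_succ_iff.mp (Finset.mem_range.mp ht)
    have htNr : (t : ℝ) ≤ (N : ℝ) := by exact_mod_cast htN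
    have hc₁ : (-j ≤ m₁ ∧ m₁ ≤ j) ∧ (-j ≤ -j + (t : ℝ) ∧ -j + (t : ℝ) ≤ j) ∧
        (∃ a : ℤ, j + m₁ = a) ∧ (∃ a : ℤ, j - m₁ = a) ∧
        (∃ a : ℤ, j + (-j + (t : ℝ)) = a) ∧ (∃ a : ℤ, j - (-j + (t : ℝ)) = a) := by
      refine ⟨⟨hm₁l, hm₁u⟩, ⟨by linarith [Nat.cast_nonneg (α := ℝ) t], by linarith⟩, ⟨za₁, hza₁⟩,
        ⟨(N : ℤ) - za₁, by push_cast; linarith [hza₁]⟩,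
        ⟨(t : ℤ), by push_cast; ring⟩, ⟨(N : ℤ) - t, by push_cast; linarith⟩⟩
    have hc₂ : (-j ≤ m₂ ∧ m₂ ≤ j) ∧ (-j ≤ -j + (t : ℝ) ∧ -j + (t : ℝ) ≤ j) ∧
        (∃ a : ℤ, j + m₂ = a) ∧ (∃ a : ℤ, j - m₂ = a) ∧
        (∃ a : ℤ, j + (-j + (t : ℝ)) = a) ∧ (∃ a : ℤ, j - (-j + (t : ℝ)) = a) := by
      refine ⟨⟨hm₂l, hm₂u⟩, ⟨by linarith [Nat.cast_nonneg (α := ℝ) t], by linarith⟩, ⟨za₂, hza₂⟩,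
        ⟨(N : ℤ) - za₂, by push_cast; linarith [hza₂]⟩,
        ⟨(t : ℤ), by push_cast; ring⟩, ⟨(N : ℤ) - t, by push_cast; linarith⟩⟩
    rw [WignerD, if_pos hc₁, WignerD, if_pos hc₂]
    rw [show j + m₁ + 1 = ((a₁ : ℕ) : ℝ) + 1 by rw [ha₁],
      show j - m₁ + 1 = (((N - a₁ : ℕ)) : ℝ) + 1 by
        push_cast [Nat.cast_sub h1N]; linarith,
      show j + m₂ + 1 = ((a₂ : ℕ) : ℝ) + 1 by rw [ha₂],
      show j - m₂ + 1 = (((N - a₂ : ℕ)) : ℝ) + 1 by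
        push_cast [Nat.cast_sub h2N]; linarith,
      show j + (-j + (t : ℝ)) + 1 = ((t : ℕ) : ℝ) + 1 by ring,
      show j - (-j + (t : ℝ)) + 1 = (((N - t : ℕ)) : ℝ) + 1 by
        push_cast [Nat.cast_sub htN]; linarith]
    simp only [Real.Gamma_nat_eq_factorial]
    simp only [map_mul, Complex.conj_ofReal, ← Complex.exp_conj, map_add, Complex.conj_I]
    push_cast
    have hT : ((Real.sqrt ((t.factorial : ℝ) * ((N - t).factorial : ℝ)) : ℝ) : ℂ) *
        ((Real.sqrt ((t.factorial : ℝ) * ((N - t).factorial : ℝ)) : ℝ) : ℂ)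
        = ((t.factorial : ℝ) : ℂ) * (((N - t).factorial : ℝ) : ℂ) := by
      rw [← Complex.ofReal_mul, Real.mul_self_sqrt (by positivity)]
      push_cast
      ring
    have hE : Complex.exp (Complex.I * (n : ℂ) * (ζ : ℂ)) *
        Complex.exp (-Complex.I * (n : ℂ) * (ζ : ℂ)) = 1 := by
      rw [← Complex.exp_add, show Complex.I * (n : ℂ) * (ζ : ℂ) +
        -Complex.I * (n : ℂ) * (ζ : ℂ) = 0 by ring, Complex.exp_zero]
    have hY : Complex.exp (Complex.I * ((m₁ : ℂ) * (ψ : ℂ) + (-(j : ℂ) + (t : ℂ)) * (φ : ℂ))) *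
        Complex.exp (-Complex.I * ((m₂ : ℂ) * (ψ : ℂ) + (-(j : ℂ) + (t : ℂ)) * (φ : ℂ)))
        = Complex.exp (Complex.I * (((m₁ : ℂ) - (m₂ : ℂ)) * (ψ : ℂ))) := by
      rw [← Complex.exp_add]
      congr 1
      ring
    trans (((Real.sqrt ((a₁.factorial : ℝ) * ((N - a₁).factorial : ℝ)) : ℝ) : ℂ) *
        ((Real.sqrt ((a₂.factorial : ℝ) * ((N - a₂).factorial : ℝ)) : ℝ) : ℂ)) *
        (((Real.sqrt ((t.factorial : ℝ) * ((N - t).factorial : ℝ)) : ℝ) : ℂ) *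
          ((Real.sqrt ((t.factorial : ℝ) * ((N - t).factorial : ℝ)) : ℝ) : ℂ)) *
        (Complex.exp (Complex.I * (n : ℂ) * (ζ : ℂ)) *
          Complex.exp (-Complex.I * (n : ℂ) * (ζ : ℂ))) *
        (Complex.exp (Complex.I * ((m₁ : ℂ) * (ψ : ℂ) + (-(j : ℂ) + (t : ℂ)) * (φ : ℂ))) *
          Complex.exp (-Complex.I * ((m₂ : ℂ) * (ψ : ℂ) + (-(j : ℂ) + (t : ℂ)) * (φ : ℂ)))) *
        (((wignerd j m₁ (-j + t) θ : ℝ) : ℂ) * ((wignerd j m₂ (-j + t) θ : ℝ) : ℂ))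
    · ring
    · rw [hT, hE, hY]
      push_cast
      ring
  rw [Finset.sum_congr rfl hterm, ← Finset.mul_sum]
  have hsum : ∑ t ∈ Finset.range (N + 1),
      ((((t.factorial * (N - t).factorial : ℕ) : ℝ) *
        (wignerd j m₁ (-j + t) θ * wignerd j m₂ (-j + t) θ) : ℝ) : ℂ)
      = (((∑ t ∈ Finset.range (N + 1), ((t.factorial * (N - t).factorial : ℕ) : ℝ) *
          (wignerd j m₁ (-j + t) θ * wignerd j m₂ (-j + t) θ)) : ℝ) : ℂ) := by
    push_cast
    ring
  rw [hsum, real_orth j m₁ m₂ θ N a₁ a₂ ha₁ ha₂ hN h1N h2N]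
  by_cases hmm : m₁ = m₂
  · have haa : a₁ = a₂ := by
      have h' : (a₁ : ℝ) = a₂ := by rw [← ha₁, ← ha₂, hmm]
      exact_mod_cast h'
    rw [if_pos haa, if_pos hmm, ← haa, show (m₁ - m₂) * ψ = 0 by rw [hmm]; ring]
    rw [Real.mul_self_sqrt (by positivity)]
    have hne : ((a₁.factorial * (N - a₁).factorial : ℕ) : ℝ) ≠ 0 :=
      Nat.cast_ne_zero.mpr (by positivity)
    simp only [Complex.ofReal_zero, mul_zero, Complex.exp_zero, mul_one]
    rw [← Complex.ofReal_mul,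
      show ((a₁.factorial : ℝ) * ((N - a₁).factorial : ℝ)) *
          (((a₁.factorial * (N - a₁).factorial : ℕ) : ℝ))⁻¹ = 1 by
        push_cast
        exact mul_inv_cancel₀ (by positivity),
      Complex.ofReal_one]
  · have haa : a₁ ≠ a₂ := by
      intro h
      exact hmm (by have : (a₁ : ℝ) = a₂ := by exact_mod_cast h
                    linarith [ha₁, ha₂])
    rw [if_neg haa, if_neg hmm]
    simp
end

section
/- Let j ≥ 0 be a half-integer and m₁, m₂ half-integers with j+m₁, j+m₂ ∈ ℤ, −j ≤ m₁, m₂ ≤ j and m₁ ≥ m₂. Then for every θ ∈ (0, π): d^j_{m₁,m₂}(θ) = ( sin(θ/2)^{m₁−m₂} · cos(θ/2)^{2j−m₁+m₂} / ((j−m₁)! · (m₁−m₂)! · (j+m₂)!) ) · Σ_{s=0}^{j−m₁} ( (−j+m₁)_s · (−j−m₂)_s / ((1+m₁−m₂)_s · s!) ) · (−tan(θ/2)²)^s, where (a)_s = a(a+1)⋯(a+s−1) denotes the rising factorial (Pochhammer symbol) with (a)_0 = 1. -/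
/-! With `n = j - m₁`, `b = j + m₂`, `k = m₁ - m₂` (natural numbers), the substitution `p = k + s`
turns the defining sum into a sum over `s ≤ n`; the terms with `s > b` may be added for free since
`1/Γ` vanishes at the non-positive integers. Termwise, `(-n)_s (-b)_s = n!/(n-s)! · b!/(b-s)!`,
`(k+1)_s = (k+s)!/k!`, and
`sin(θ/2)^(k+2s) cos(θ/2)^(n+b-2s) = sin(θ/2)^k cos(θ/2)^(n+b) tan(θ/2)^(2s)`. -/

open Finset Real Polynomial Nat

theorem exists_natCast_eq_of_intCast_eq {x : ℝ} {z : ℤ} (hz : x = z) (hx : 0 ≤ x) :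
    ∃ n : ℕ, x = n := by
  obtain ⟨n, rfl⟩ := Int.eq_ofNat_of_zero_le (Int.cast_nonneg_iff.mp (hz ▸ hx))
  exact ⟨n, hz⟩

theorem Finset.sum_Icc_natCast_add_eq_sum_range {M : Type*} [AddCommMonoid M] (f : ℤ → M)
    (k m : ℕ) : ∑ p ∈ Icc (k : ℤ) (m + k), f p = ∑ s ∈ range (m + 1), f (s + k) := by
  refine sum_nbij' (fun p ↦ (p - k).toNat) (fun s ↦ (s : ℤ) + k) ?_ ?_ ?_ ?_ ?_ <;>
    intro x hx <;> simp only [mem_Icc, mem_range] at hx ⊢ <;> first | omega | congr 1; omega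

theorem Real.inv_Gamma_natCast_sub_add_one (b s : ℕ) :
    (Gamma ((b : ℝ) - s + 1))⁻¹ = b.descFactorial s / b ! := by
  rcases le_or_gt s b with hsb | hbs
  · rw [show (b : ℝ) - s + 1 = (b - s : ℕ) + 1 by push_cast [hsb]; ring, Gamma_nat_eq_factorial,
      ← factorial_mul_descFactorial hsb, cast_mul]
    have : (b.descFactorial s : ℝ) ≠ 0 := by
      exact_mod_cast (descFactorial_pos.mpr hsb).ne'
    field_simp
  · rw [show (b : ℝ) - s + 1 = -(s - (b + 1) : ℕ) by rw [cast_sub hbs]; push_cast; ring,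
      Gamma_neg_nat_eq_zero, descFactorial_eq_zero_iff_lt.mpr hbs]
    simp

theorem ascPochhammer_eval_neg_mul_eval_neg {R : Type*} [CommRing R] (n b s : ℕ) :
    (ascPochhammer R s).eval (-n : R) * (ascPochhammer R s).eval (-b : R) =
      n.descFactorial s * b.descFactorial s := by
  simp only [ascPochhammer_eval_neg_eq_descPochhammer, descPochhammer_eval_eq_descFactorial]
  rw [mul_mul_mul_comm, ← mul_pow, neg_one_mul, neg_neg, one_pow, one_mul]

theorem pow_add_two_mul_mul_zpow_sub_two_mul {K : Type*} [Field K] (a : K) {c : K} (hc : c ≠ 0)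
    (k N s : ℕ) : a ^ (k + 2 * s) * c ^ ((N : ℤ) - 2 * s) = a ^ k * c ^ N * ((a / c) ^ 2) ^ s := by
  rw [zpow_sub₀ hc, div_pow, div_pow, ← pow_mul, ← pow_mul]
  norm_cast
  field_simp
  ring

theorem wignerd_eq_sum_range {j m₁ m₂ : ℝ} {n b k : ℕ} (hn : j - m₁ = n) (hb : j + m₂ = b)
    (hk : m₁ - m₂ = k) (θ : ℝ) :
    wignerd j m₁ m₂ θ = ∑ s ∈ range (n + 1),
      (-1) ^ s * (n.descFactorial s / n ! : ℝ) * (b.descFactorial s / b !) / ((k + s)! * s !) *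
        sin (θ / 2) ^ (k + 2 * s) * cos (θ / 2) ^ ((n + b : ℕ) - 2 * s : ℤ) := by
  have hmin : ⌊min (j - m₂) (j + m₁)⌋ = (min n b : ℕ) + k := by
    rw [show min (j - m₂) (j + m₁) = (min n b + k : ℕ) by
        push_cast; rw [← min_add_add_right]; congr 1 <;> linarith,
      Int.floor_natCast]
    push_cast; rfl
  have hup : ⌊2 * j + m₁ - m₂⌋ = (n + b + 2 * k : ℕ) := by
    rw [show 2 * j + m₁ - m₂ = (n + b + 2 * k : ℕ) by push_cast; linarith, Int.floor_natCast]
  have hceil : ⌈m₂ - m₁⌉ = -k := by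
    rw [show m₂ - m₁ = ((-k : ℤ) : ℝ) by push_cast; linarith, Int.ceil_intCast]
  rw [wignerd, hk, Int.ceil_natCast, max_eq_right (Int.natCast_nonneg k), hmin, hceil, hup,
    sum_Icc_natCast_add_eq_sum_range]
  refine (sum_congr rfl fun s _ ↦ ?_).trans (sum_subset (range_subset_range.mpr (by omega)) ?_)
  · have hΓb : j + m₁ - ((s + k : ℤ) : ℝ) + 1 = (b : ℝ) - s + 1 := by push_cast; linarith
    have hΓn : j - m₂ - ((s + k : ℤ) : ℝ) + 1 = (n : ℝ) - s + 1 := by push_cast; linarith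
    have hΓks : ((s + k : ℤ) : ℝ) + 1 = (k + s : ℕ) + 1 := by push_cast; ring
    have hΓs : m₂ - m₁ + ((s + k : ℤ) : ℝ) + 1 = s + 1 := by push_cast; linarith
    have hsign : -(k : ℤ) + (s + k) = s := by ring
    have hsin : -(k : ℤ) + 2 * (s + k) = (k + 2 * s : ℕ) := by push_cast; ring
    have hcos : ((n + b + 2 * k : ℕ) : ℤ) - 2 * (s + k) = (n + b : ℕ) - 2 * s := by push_cast; ring
    rw [hΓb, hΓn, hΓks, hΓs, hsign, hsin, hcos, zpow_natCast, zpow_natCast,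
      Gamma_nat_eq_factorial, Gamma_nat_eq_factorial]
    simp only [div_eq_mul_inv, mul_inv, inv_Gamma_natCast_sub_add_one]
    ring
  · intro s hs hsb
    simp only [mem_range] at hs hsb
    simp [descFactorial_eq_zero_iff_lt.mpr (show b < s by omega)]

open Polynomial in
theorem wignerd_hypergeometric_general (j m₁ m₂ : ℝ) (hj : HalfInt j)
    (hjm₁ : ∃ a : ℤ, j + m₁ = a) (hjm₂ : ∃ a : ℤ, j + m₂ = a)
    (hm₁u : m₁ ≤ j) (hm₂l : -j ≤ m₂)
    (hm : m₁ ≥ m₂) (θ : ℝ) (hθ : θ ∈ Set.Ioo 0 Real.pi) :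
    wignerd j m₁ m₂ θ =
      Real.sin (θ / 2) ^ ⌊m₁ - m₂⌋ * Real.cos (θ / 2) ^ ⌊2 * j - m₁ + m₂⌋ /
        (Real.Gamma (j - m₁ + 1) * Real.Gamma (m₁ - m₂ + 1) * Real.Gamma (j + m₂ + 1)) *
        ∑ s ∈ Finset.range (⌊j - m₁⌋.toNat + 1),
          ((ascPochhammer ℝ s).eval (-j + m₁) * (ascPochhammer ℝ s).eval (-j - m₂)) /
            ((ascPochhammer ℝ s).eval (1 + m₁ - m₂) * (s.factorial : ℝ)) *
            (-(Real.tan (θ / 2)) ^ 2) ^ s := by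
  obtain ⟨t, ht⟩ := hj
  obtain ⟨a, ha⟩ := hjm₁
  obtain ⟨c, hc⟩ := hjm₂
  obtain ⟨n, hn⟩ := exists_natCast_eq_of_intCast_eq (z := t - a) (by push_cast; linarith)
    (by linarith : 0 ≤ j - m₁)
  obtain ⟨b, hb⟩ := exists_natCast_eq_of_intCast_eq hc (by linarith)
  obtain ⟨k, hk⟩ := exists_natCast_eq_of_intCast_eq (z := a - c) (by push_cast; linarith)
    (by linarith : 0 ≤ m₁ - m₂)
  have hcos : cos (θ / 2) ≠ 0 :=
    (cos_pos_of_mem_Ioo ⟨by linarith [hθ.1, pi_pos], by linarith [hθ.2]⟩).ne'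
  rw [wignerd_eq_sum_range hn hb hk, hn, hk, hb, show 2 * j - m₁ + m₂ = (n + b : ℕ) by
      push_cast; linarith, Int.floor_natCast, Int.floor_natCast, Int.floor_natCast,
    Int.toNat_natCast, Gamma_nat_eq_factorial, Gamma_nat_eq_factorial, Gamma_nat_eq_factorial,
    mul_sum]
  refine sum_congr rfl fun s _ ↦ ?_
  rw [show -j + m₁ = -n by linarith, show -j - m₂ = -b by linarith,
    show 1 + m₁ - m₂ = (k + 1 : ℕ) by push_cast; linarith, ascPochhammer_eval_neg_mul_eval_neg,
    ascPochhammer_nat_eq_natCast_ascFactorial, ← factorial_mul_ascFactorial, tan_eq_sin_div_cos,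
    neg_pow ((_ / _) ^ 2), mul_assoc _ (sin _ ^ _), pow_add_two_mul_mul_zpow_sub_two_mul _ hcos,
    zpow_natCast, zpow_natCast]
  push_cast
  ring

open Polynomial in
/-- The hypergeometric expression (3.14) for the little Wigner d-function when `m₁ ≥ m₂`:
`d^j_{m₁,m₂}(θ) = sin(θ/2)^{m₁−m₂} cos(θ/2)^{2j−m₁+m₂} / ((j−m₁)!(m₁−m₂)!(j+m₂)!) ·
₂F₁(−j+m₁, −j−m₂; 1+m₁−m₂; −tan²(θ/2))`, the hypergeometric series being a terminating sum
written with rising factorials (Pochhammer symbols). -/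
theorem wignerd_hypergeometric (j m₁ m₂ : ℝ) (hj : HalfInt j) (hj0 : 0 ≤ j)
    (hm₁ : HalfInt m₁) (hm₂ : HalfInt m₂)
    (hjm₁ : ∃ a : ℤ, j + m₁ = a) (hjm₂ : ∃ a : ℤ, j + m₂ = a)
    (hm₁l : -j ≤ m₁) (hm₁u : m₁ ≤ j) (hm₂l : -j ≤ m₂) (hm₂u : m₂ ≤ j)
    (hm : m₁ ≥ m₂) (θ : ℝ) (hθ : θ ∈ Set.Ioo 0 Real.pi) :
    wignerd j m₁ m₂ θ =
      Real.sin (θ / 2) ^ ⌊m₁ - m₂⌋ * Real.cos (θ / 2) ^ ⌊2 * j - m₁ + m₂⌋ /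
        (Real.Gamma (j - m₁ + 1) * Real.Gamma (m₁ - m₂ + 1) * Real.Gamma (j + m₂ + 1)) *
        ∑ s ∈ Finset.range (⌊j - m₁⌋.toNat + 1),
          ((ascPochhammer ℝ s).eval (-j + m₁) * (ascPochhammer ℝ s).eval (-j - m₂)) /
            ((ascPochhammer ℝ s).eval (1 + m₁ - m₂) * (s.factorial : ℝ)) *
            (-(Real.tan (θ / 2)) ^ 2) ^ s :=
  wignerd_hypergeometric_general j m₁ m₂ hj hjm₁ hjm₂ hm₁u hm₂l hm θ hθ
end

section
/- Let j ≥ 0 be a half-integer and m₁, m₂ half-integers with j+m₁, j+m₂ ∈ ℤ, −j ≤ m₁, m₂ ≤ j and m₁ ≥ m₂. Then for every θ ∈ (0, π): d^j_{m₁,m₂}(θ) = ( sin(θ/2)^{m₁−m₂} · cos(θ/2)^{m₁+m₂} / ((j+m₂)! · (j−m₂)!) ) · P^{(m₁−m₂, m₁+m₂)}_{j−m₁}(cos θ), where for integers α ≥ 0, β, and N ≥ 0 with α+β+N ≥ 0 the Jacobi polynomial is P^{(α,β)}_N(x) = ( (α+N)! / (N! · (α+β+N)! ) ) · Σ_{s=0}^{N}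 binom(N, s) · ( (α+β+N+s)! / (α+s)! ) · ((x−1)/2)^s. -/
/-- The Jacobi polynomial `P^{(α,β)}_N(x)` for integer parameters, defined by
`P^{(α,β)}_N(x) = ((α+N)!/(N!·(α+β+N)!)) · Σ_{s=0}^{N} binom(N,s) ((α+β+N+s)!/(α+s)!)
((x−1)/2)^s`, the factorials of the nonnegative integers appearing being expressed via the
Gamma function. -/
noncomputable def jacobiP (α β : ℝ) (N : ℕ) (x : ℝ) : ℝ :=
  Real.Gamma (α + N + 1) / ((N.factorial : ℝ) * Real.Gamma (α + β + N + 1)) *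
    ∑ s ∈ Finset.range (N + 1),
      (N.choose s : ℝ) * (Real.Gamma (α + β + N + s + 1) / Real.Gamma (α + s + 1)) *
        ((x - 1) / 2) ^ s

open Finset Nat Real

theorem Nat.cast_factorial_ne_zero {K : Type*} [AddMonoidWithOne K] [CharZero K] (n : ℕ) :
    (n ! : K) ≠ 0 :=
  cast_ne_zero.mpr (factorial_ne_zero n)

theorem Nat.choose_mul_factorial_mul_add_factorial {s t : ℕ} (h : s ≤ t) (α : ℕ) :
    t.choose s * s ! * (α + t)! = (α + t).choose (t - s) * t ! * (α + s)! := by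
  refine Nat.eq_of_mul_eq_mul_right (factorial_pos (t - s)) ?_
  have ht := choose_mul_factorial_mul_factorial h
  have hαt := choose_mul_factorial_mul_factorial (show t - s ≤ α + t by omega)
  rw [show α + t - (t - s) = α + s by omega] at hαt
  calc _ = (t.choose s * s ! * (t - s)!) * (α + t)! := by ring
    _ = t ! * ((α + t).choose (t - s) * (t - s)! * (α + s)!) := by rw [ht, hαt]
    _ = _ := by ring

theorem pow_mul_one_add_pow_sub {R : Type*} [CommSemiring R] (x : R) {s N : ℕ} (h : s ≤ N) :
    x ^ s * (1 + x) ^ (N - s) = ∑ t ∈ Ico s (N + 1), ((N - s).choose (t - s) : R) * x ^ t := by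
  rw [sum_Ico_eq_sum_range, add_comm 1 x, add_pow, mul_sum, show N + 1 - s = N - s + 1 by omega]
  refine sum_congr rfl fun k _ => ?_
  rw [Nat.add_sub_cancel_left, one_pow, pow_add]
  ring

theorem sum_mul_pow_mul_one_add_pow {R : Type*} [CommSemiring R] (a : ℕ → R) (N : ℕ) (x : R) :
    ∑ s ∈ range (N + 1), a s * (x ^ s * (1 + x) ^ (N - s)) =
      ∑ t ∈ range (N + 1), (∑ s ∈ range (t + 1), a s * (N - s).choose (t - s)) * x ^ t := by
  calc _ = ∑ s ∈ Ico 0 (N + 1), ∑ t ∈ Ico s (N + 1), a s * ((N - s).choose (t - s) * x ^ t) := by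
        rw [← range_eq_Ico]
        refine sum_congr rfl fun s hs => ?_
        rw [pow_mul_one_add_pow_sub x (Nat.lt_succ_iff.mp (mem_range.mp hs)), mul_sum]
    _ = _ := by
        rw [sum_Ico_Ico_comm]
        simp only [← range_eq_Ico, sum_mul, mul_assoc]

section Field

variable {K : Type*} [Field K] [CharZero K]

theorem sum_choose_mul_choose_mul_factorial_div_mul_choose (α B N t : ℕ) :
    ∑ s ∈ range (t + 1),
      (B.choose s * N.choose s * (s ! / (α + s)!) : K) * (N - s).choose (t - s)
      = N.choose t * ((B + α + t)! / ((α + t)! * (B + α)!)) := by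
  have hterm : ∀ s ∈ range (t + 1),
      (B.choose s * N.choose s * (s ! / (α + s)!) : K) * (N - s).choose (t - s)
      = N.choose t * (t ! / (α + t)!) * (B.choose s * (α + t).choose (t - s)) := by
    intro s hs
    have hst : s ≤ t := Nat.lt_succ_iff.mp (mem_range.mp hs)
    have h1 : (N.choose s * (N - s).choose (t - s) : K) = N.choose t * t.choose s := by
      exact_mod_cast (choose_mul hst).symm
    have h2 : (t.choose s * s ! * (α + t)! : K) = (α + t).choose (t - s) * t ! * (α + s)! := by
      exact_mod_cast choose_mul_factorial_mul_add_factorial hst α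
    have := cast_factorial_ne_zero (K := K) (α + s)
    have := cast_factorial_ne_zero (K := K) (α + t)
    field_simp
    linear_combination
      (B.choose s * s ! * (α + t)! : K) * h1 + (B.choose s * N.choose t : K) * h2
  have vandermonde : ∑ s ∈ range (t + 1), (B.choose s * (α + t).choose (t - s) : K)
      = (B + α + t).choose t := by
    rw [add_assoc, add_choose_eq, Nat.sum_antidiagonal_eq_sum_range_succ_mk]
    push_cast
    rfl
  rw [sum_congr rfl hterm, ← mul_sum, vandermonde, cast_choose K (by omega : t ≤ B + α + t),
    Nat.add_sub_cancel]
  have := cast_factorial_ne_zero (K := K) t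
  field_simp

theorem sum_choose_mul_choose_mul_pow_mul_one_add_pow (α B N : ℕ) (x : K) :
    ∑ s ∈ range (N + 1),
      (B.choose s * N.choose s * (s ! / (α + s)!) : K) * (x ^ s * (1 + x) ^ (N - s))
      = ∑ t ∈ range (N + 1), N.choose t * ((B + α + t)! / ((α + t)! * (B + α)!)) * x ^ t := by
  simp only [sum_mul_pow_mul_one_add_pow, sum_choose_mul_choose_mul_factorial_div_mul_choose]

theorem sum_wignerd_terms_eq (α B N : ℕ) {σ c : K} (hc : c ≠ 0) (h : σ ^ 2 + c ^ 2 = 1) :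
    ∑ s ∈ range (min N B + 1),
      (-1) ^ s / ((B - s)! * (α + s)! * s ! * (N - s)! : K) *
        σ ^ (α + 2 * s) * c ^ (B + N - 2 * s)
      = σ ^ α * c ^ ((B : ℤ) - N) / (B ! * (N + α)!) *
        ((α + N)! / (N ! * (B + α)!) *
          ∑ t ∈ range (N + 1), N.choose t * ((B + α + t)! / (α + t)!) * (-σ ^ 2) ^ t) := by
  set f : ℕ → K := fun s ↦
    (B.choose s * N.choose s * (s ! / (α + s)!) : K) * ((-σ ^ 2) ^ s * (1 + -σ ^ 2) ^ (N - s))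
  have hterm : ∀ s ∈ range (min N B + 1),
      (-1) ^ s / ((B - s)! * (α + s)! * s ! * (N - s)! : K) *
        σ ^ (α + 2 * s) * c ^ (B + N - 2 * s)
      = σ ^ α * c ^ ((B : ℤ) - N) / (B ! * N !) * f s := by
    intro s hs
    have hsN : s ≤ N := by have := mem_range.mp hs; omega
    have hsB : s ≤ B := by have := mem_range.mp hs; omega
    have hcos : c ^ (B + N - 2 * s) = c ^ ((B : ℤ) - N) * (1 + -σ ^ 2) ^ (N - s) := by
      rw [show 1 + -σ ^ 2 = c ^ 2 by linear_combination -h, ← pow_mul, ← zpow_natCast,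
        ← zpow_natCast, ← zpow_add₀ hc]
      congr 1; omega
    simp only [f]
    rw [hcos, cast_choose K hsB, cast_choose K hsN, neg_pow, pow_add, pow_mul]
    have := cast_factorial_ne_zero (K := K) B
    have := cast_factorial_ne_zero (K := K) N
    field_simp
    ring
  have hext : ∑ s ∈ range (min N B + 1), f s = ∑ s ∈ range (N + 1), f s := by
    refine sum_subset (range_subset_range.mpr (by omega)) fun s hs hs' => ?_
    simp only [mem_range] at hs hs'
    simp [f, choose_eq_zero_of_lt (show B < s by omega)]
  rw [sum_congr rfl hterm, ← mul_sum, hext, sum_choose_mul_choose_mul_pow_mul_one_add_pow,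
    mul_sum, mul_sum, mul_sum]
  refine sum_congr rfl fun t _ => ?_
  rw [add_comm α N]
  have := cast_factorial_ne_zero (K := K) B
  have := cast_factorial_ne_zero (K := K) N
  have := cast_factorial_ne_zero (K := K) (N + α)
  have := cast_factorial_ne_zero (K := K) (B + α)
  field_simp

end Field

theorem exists_nat_eq_of_int {x : ℝ} (hx : ∃ a : ℤ, x = a) (h0 : 0 ≤ x) : ∃ n : ℕ, x = n := by
  obtain ⟨a, rfl⟩ := hx
  exact ⟨a.toNat, by exact_mod_cast (Int.toNat_of_nonneg (by exact_mod_cast h0)).symm⟩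

theorem Real.Gamma_add_one_of_eq_natCast {x : ℝ} {n : ℕ} (h : x = n) : Gamma (x + 1) = n ! := by
  rw [h, Gamma_nat_eq_factorial]

theorem jacobiP_natCast (α N n : ℕ) {β : ℝ} (h : α + β + N = n) (x : ℝ) :
    jacobiP α β N x = (α + N)! / (N ! * n !) *
      ∑ s ∈ range (N + 1), N.choose s * ((n + s)! / (α + s)! : ℝ) * ((x - 1) / 2) ^ s := by
  rw [jacobiP, h, Gamma_add_one_of_eq_natCast (n := α + N) (by push_cast; ring),
    Gamma_nat_eq_factorial]
  congr 1
  refine sum_congr rfl fun s _ => ?_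
  rw [Gamma_add_one_of_eq_natCast (n := n + s) (by push_cast; ring),
    Gamma_add_one_of_eq_natCast (n := α + s) (by push_cast; ring)]

theorem wignerd_eq_sum {j m₁ m₂ : ℝ} {α B N : ℕ} (hα : m₁ - m₂ = α) (hB : j + m₂ = B)
    (hN : j - m₁ = N) (θ : ℝ) :
    wignerd j m₁ m₂ θ = ∑ s ∈ range (min N B + 1),
      (-1) ^ s / ((B - s)! * (α + s)! * s ! * (N - s)! : ℝ) *
        sin (θ / 2) ^ (α + 2 * s) * cos (θ / 2) ^ (B + N - 2 * s) := by
  have hceil : ⌈m₁ - m₂⌉ = α := by rw [hα, Int.ceil_natCast]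
  have hceil' : ⌈m₂ - m₁⌉ = -α := by
    rw [show m₂ - m₁ = ((-α : ℤ) : ℝ) by push_cast; linarith, Int.ceil_intCast]
  have hmin : ⌊min (j - m₂) (j + m₁)⌋ = α + (min N B : ℕ) := by
    rw [show j - m₂ = N + α by linarith, show j + m₁ = B + α by linarith, min_add_add_right,
      show min (N : ℝ) B + α = ((α + min N B : ℕ) : ℝ) by push_cast; ring, Int.floor_natCast]
    push_cast; rfl
  have hfloor : ⌊2 * j + m₁ - m₂⌋ = (B + N + 2 * α : ℕ) := by
    rw [show 2 * j + m₁ - m₂ = ((B + N + 2 * α : ℕ) : ℝ) by push_cast; linarith,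
      Int.floor_natCast]
  rw [wignerd, hceil, hceil', hfloor, max_eq_right (Int.natCast_nonneg α), hmin,
    Int.Icc_eq_finset_map, sum_map,
    show (α + (min N B : ℕ) + 1 - α : ℤ).toNat = min N B + 1 by omega]
  refine sum_congr rfl fun s hs => ?_
  have hsN : s ≤ N := by have := mem_range.mp hs; omega
  have hsB : s ≤ B := by have := mem_range.mp hs; omega
  simp only [Function.Embedding.trans_apply, Nat.castEmbedding_apply, addLeftEmbedding_apply,
    Int.cast_add, Int.cast_natCast]
  rw [Gamma_add_one_of_eq_natCast (n := B - s) (by push_cast [hsB]; linarith),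
    Gamma_add_one_of_eq_natCast (n := α + s) (by push_cast; ring),
    Gamma_add_one_of_eq_natCast (n := s) (by linarith),
    Gamma_add_one_of_eq_natCast (n := N - s) (by push_cast [hsN]; linarith),
    show -(α : ℤ) + (α + s) = (s : ℕ) by ring,
    show -(α : ℤ) + 2 * (α + s) = (α + 2 * s : ℕ) by push_cast; ring,
    show ((B + N + 2 * α : ℕ) : ℤ) - 2 * (α + s) = (B + N - 2 * s : ℕ) by omega]
  simp only [zpow_natCast]

theorem wignerd_jacobi_general (j m₁ m₂ : ℝ) (hj : HalfInt j)
    (hjm₁ : ∃ a : ℤ, j + m₁ = a) (hjm₂ : ∃ a : ℤ, j + m₂ = a)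
    (hm₁u : m₁ ≤ j) (hm₂l : -j ≤ m₂)
    (hm : m₁ ≥ m₂) (θ : ℝ) (hθ : θ ∈ Set.Ioo 0 Real.pi) :
    wignerd j m₁ m₂ θ =
      Real.sin (θ / 2) ^ ⌊m₁ - m₂⌋ * Real.cos (θ / 2) ^ ⌊m₁ + m₂⌋ /
        (Real.Gamma (j + m₂ + 1) * Real.Gamma (j - m₂ + 1)) *
        jacobiP (m₁ - m₂) (m₁ + m₂) (⌊j - m₁⌋.toNat) (Real.cos θ) := by
  obtain ⟨k, hk⟩ := hj
  obtain ⟨A, hA⟩ := hjm₁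
  obtain ⟨A', hA'⟩ := hjm₂
  obtain ⟨α, hα⟩ : ∃ α : ℕ, m₁ - m₂ = α :=
    exists_nat_eq_of_int ⟨A - A', by push_cast; linarith⟩ (by linarith)
  obtain ⟨B, hB⟩ : ∃ B : ℕ, j + m₂ = B := exists_nat_eq_of_int ⟨A', hA'⟩ (by linarith)
  obtain ⟨N, hN⟩ : ∃ N : ℕ, j - m₁ = N :=
    exists_nat_eq_of_int ⟨k - A, by push_cast; linarith⟩ (by linarith)
  have hc : cos (θ / 2) ≠ 0 :=
    (cos_pos_of_mem_Ioo ⟨by linarith [hθ.1, pi_pos], by linarith [hθ.2]⟩).ne'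
  have hcos : (cos θ - 1) / 2 = -sin (θ / 2) ^ 2 := by
    nth_rw 1 [show θ = 2 * (θ / 2) by ring, cos_two_mul_eq_one_sub]; ring
  rw [wignerd_eq_sum hα hB hN, sum_wignerd_terms_eq α B N hc (sin_sq_add_cos_sq _),
    show m₁ + m₂ = ((B - N : ℤ) : ℝ) by push_cast; linarith, Int.floor_intCast,
    Gamma_add_one_of_eq_natCast hB,
    Gamma_add_one_of_eq_natCast (n := N + α) (by push_cast; linarith),
    hN, Int.floor_natCast, Int.toNat_natCast, hα, Int.floor_natCast, zpow_natCast,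
    jacobiP_natCast α N (B + α) (by push_cast; linarith), hcos]

/-- Formula (3.19): the little Wigner d-function via a Jacobi polynomial, for `m₁ ≥ m₂`:
`d^j_{m₁,m₂}(θ) = sin(θ/2)^{m₁−m₂} cos(θ/2)^{m₁+m₂} / ((j+m₂)!(j−m₂)!) ·
P^{(m₁−m₂, m₁+m₂)}_{j−m₁}(cos θ)`. -/
theorem wignerd_jacobi (j m₁ m₂ : ℝ) (hj : HalfInt j) (hj0 : 0 ≤ j)
    (hm₁ : HalfInt m₁) (hm₂ : HalfInt m₂)
    (hjm₁ : ∃ a : ℤ, j + m₁ = a) (hjm₂ : ∃ a : ℤ, j + m₂ = a)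
    (hm₁l : -j ≤ m₁) (hm₁u : m₁ ≤ j) (hm₂l : -j ≤ m₂) (hm₂u : m₂ ≤ j)
    (hm : m₁ ≥ m₂) (θ : ℝ) (hθ : θ ∈ Set.Ioo 0 Real.pi) :
    wignerd j m₁ m₂ θ =
      Real.sin (θ / 2) ^ ⌊m₁ - m₂⌋ * Real.cos (θ / 2) ^ ⌊m₁ + m₂⌋ /
        (Real.Gamma (j + m₂ + 1) * Real.Gamma (j - m₂ + 1)) *
        jacobiP (m₁ - m₂) (m₁ + m₂) (⌊j - m₁⌋.toNat) (Real.cos θ) :=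
  wignerd_jacobi_general j m₁ m₂ hj hjm₁ hjm₂ hm₁u hm₂l hm θ hθ
end

section
/- Let n be a nonnegative integer and α, β real numbers with α > −1, β > −1 and α + β > −1, and let z be a real number with z ≠ −1. Then ( Γ(α+n+1) / (n! · Γ(α+β+n+1)) ) · Σ_{m=0}^{n} binom(n, m) · ( Γ(α+β+n+m+1) / Γ(α+m+1) ) · ((z−1)/2)^m = ( Γ(n+α+1) / (n! · Γ(α+1)) ) · ((z+1)/2)^n · Σ_{m=0}^{n} ( (−n)_m · (−n−β)_m / ((α+1)_m · m!) ) · ((z−1)/(z+1))^m, where (a)_m = a(a+1)⋯(a+m−1) denotes the rising factorial with (a)_0 = 1. -/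
/-!
With `x = (z - 1) / 2` both sides are `(α + 1)_n / n!` times a polynomial in `x`: on the left the
Gamma ratios become Pochhammer symbols through `Γ(a + m) = Γ(a) (a)_m`, on the right
`((z + 1) / 2)^n ((z - 1) / (z + 1))^m = x^m (x + 1)^(n - m)`. Expanding `(x + 1)^(n - m)`, the
coefficient of `x^k` on the right is `∑ₘ (-n)_m (-n-β)_m / ((α+1)_m m!) · C(n-m, k-m)`. Since
`(-n)_m = (-1)^m m! C(n, m)` and `C(n, m) C(n-m, k-m) = C(n, k) C(k, m)`, this is `C(n, k) / (α+1)_k`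
times a Chu–Vandermonde sum, which equals `(α + β + n + 1)_k`: the coefficient on the left.
-/

open Polynomial Finset

theorem Real.Gamma_add_nat_eq_mul_ascPochhammer (x : ℝ) (hx : ∀ k : ℕ, x + k ≠ 0) (m : ℕ) :
    Real.Gamma (x + m) = Real.Gamma x * (ascPochhammer ℝ m).eval x := by
  induction m with
  | zero => simp
  | succ m ih =>
    rw [Nat.cast_succ, ← add_assoc, Real.Gamma_add_one (hx m), ih, ascPochhammer_succ_eval]
    ring

theorem Finset.sum_mul_pow_mul_add_one_pow {R : Type*} [CommSemiring R] (n : ℕ) (f : ℕ → R)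
    (x : R) :
    ∑ m ∈ range (n + 1), f m * x ^ m * (x + 1) ^ (n - m)
      = ∑ k ∈ range (n + 1), (∑ m ∈ range (k + 1), f m * (n - m).choose (k - m)) * x ^ k := by
  calc ∑ m ∈ range (n + 1), f m * x ^ m * (x + 1) ^ (n - m)
      = ∑ m ∈ range (n + 1), ∑ k ∈ Ico m (n + 1), f m * (n - m).choose (k - m) * x ^ k := by
        refine sum_congr rfl fun m hm => ?_
        rw [add_pow, sum_Ico_eq_sum_range, mul_sum, show n + 1 - m = n - m + 1 by grind]
        refine sum_congr rfl fun j _ => ?_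
        rw [Nat.add_sub_cancel_left, pow_add]
        ring
    _ = ∑ k ∈ range (n + 1), ∑ m ∈ range (k + 1), f m * (n - m).choose (k - m) * x ^ k :=
        sum_comm' fun m k => by simp only [mem_range, mem_Ico]; omega
    _ = _ := by simp only [sum_mul]

theorem Finset.pow_mul_sum_mul_div_pow {K : Type*} [Field K] (n : ℕ) (f : ℕ → K) (x : K)
    {y : K} (hy : y ≠ 0) :
    y ^ n * ∑ m ∈ range (n + 1), f m * (x / y) ^ m
      = ∑ m ∈ range (n + 1), f m * x ^ m * y ^ (n - m) := by
  rw [mul_sum]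
  refine sum_congr rfl fun m hm => ?_
  rw [← pow_sub_mul_pow y (Nat.lt_succ_iff.mp (mem_range.mp hm)), div_pow]
  field_simp

namespace Polynomial

section CommRing

variable {R : Type*} [CommRing R]

theorem descPochhammer_eval_add (r s : R) (k : ℕ) :
    (descPochhammer R k).eval (r + s) = ∑ ij ∈ antidiagonal k,
      k.choose ij.1 * ((descPochhammer R ij.1).eval r * (descPochhammer R ij.2).eval s) := by
  have h_smeval (t : R) (j : ℕ) :
      (descPochhammer R j).eval t = (descPochhammer ℤ j).smeval t := by
    rw [← descPochhammer_map (algebraMap ℤ R), eval_map_algebraMap, aeval_eq_smeval]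
  simp only [h_smeval]
  exact Ring.descPochhammer_smeval_add k (Commute.all r s)

/-- Chu–Vandermonde for rising factorials. -/
theorem ascPochhammer_eval_sub (b c : R) (k : ℕ) :
    (ascPochhammer R k).eval (c - b) = ∑ m ∈ range (k + 1),
      (-1) ^ m * k.choose m * (ascPochhammer R m).eval b *
        (ascPochhammer R (k - m)).eval (c + m) := by
  have h_desc : (ascPochhammer R k).eval (c - b)
      = (descPochhammer R k).eval (-b + (c + k - 1)) := by
    rw [descPochhammer_eval_eq_ascPochhammer]; ring_nf
  rw [h_desc, descPochhammer_eval_add, Nat.sum_antidiagonal_eq_sum_range_succ_mk]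
  refine sum_congr rfl fun m hm => ?_
  have hmk : m ≤ k := Nat.lt_succ_iff.mp (mem_range.mp hm)
  have h_neg : (descPochhammer R m).eval (-b) = (-1) ^ m * (ascPochhammer R m).eval b := by
    rw [← neg_neg b, ascPochhammer_eval_neg_eq_descPochhammer, neg_neg, ← mul_assoc, ← mul_pow,
      neg_one_mul, neg_neg, one_pow, one_mul]
  rw [h_neg, descPochhammer_eval_eq_ascPochhammer, Nat.cast_sub hmk]
  ring_nf

theorem ascPochhammer_eval_neg_natCast (n m : ℕ) :
    (ascPochhammer R m).eval (-(n : R)) = (-1) ^ m * m.factorial * n.choose m := by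
  rw [ascPochhammer_eval_neg_eq_descPochhammer, descPochhammer_eval_eq_descFactorial,
    Nat.descFactorial_eq_factorial_mul_choose]
  push_cast
  ring

end CommRing

theorem ascPochhammer_add_eval {S : Type*} [CommSemiring S] (x : S) (m j : ℕ) :
    (ascPochhammer S (m + j)).eval x
      = (ascPochhammer S m).eval x * (ascPochhammer S j).eval (x + m) := by
  rw [← ascPochhammer_mul, eval_mul, eval_comp, eval_add, eval_X, eval_natCast]

theorem sum_ascPochhammer_neg_natCast_mul_choose {K : Type*} [Field K] [CharZero K] (n k : ℕ)
    (b c : K) (hc : (ascPochhammer K k).eval c ≠ 0) :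
    ∑ m ∈ range (k + 1),
      (ascPochhammer K m).eval (-(n : K)) * (ascPochhammer K m).eval b /
        ((ascPochhammer K m).eval c * m.factorial) * (n - m).choose (k - m)
    = n.choose k * (ascPochhammer K k).eval (c - b) / (ascPochhammer K k).eval c := by
  rw [ascPochhammer_eval_sub, mul_sum, sum_div]
  refine sum_congr rfl fun m hm => ?_
  have hmk : m ≤ k := Nat.lt_succ_iff.mp (mem_range.mp hm)
  have h_split := ascPochhammer_add_eval c m (k - m)
  rw [Nat.add_sub_cancel' hmk] at h_split
  have hcm : (ascPochhammer K m).eval c ≠ 0 := left_ne_zero_of_mul (h_split ▸ hc)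
  have hckm : (ascPochhammer K (k - m)).eval (c + m) ≠ 0 := right_ne_zero_of_mul (h_split ▸ hc)
  have hfact : (m.factorial : K) ≠ 0 := Nat.cast_ne_zero.mpr m.factorial_ne_zero
  have h_choose : (n.choose m : K) * (n - m).choose (k - m) = n.choose k * k.choose m := by
    exact_mod_cast (Nat.choose_mul hmk).symm
  rw [ascPochhammer_eval_neg_natCast, h_split]
  field_simp
  linear_combination (ascPochhammer K m).eval b * h_choose

end Polynomial

theorem jacobi_two_definitions_agree_general (n : ℕ) (α β : ℝ)
    (hα : -1 < α) (hαβ : -1 < α + β) (z : ℝ) (hz : z ≠ -1) :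
    Real.Gamma (α + n + 1) / ((n.factorial : ℝ) * Real.Gamma (α + β + n + 1)) *
        ∑ m ∈ Finset.range (n + 1), (n.choose m : ℝ) *
          (Real.Gamma (α + β + n + m + 1) / Real.Gamma (α + m + 1)) * ((z - 1) / 2) ^ m =
      Real.Gamma ((n : ℝ) + α + 1) / ((n.factorial : ℝ) * Real.Gamma (α + 1)) *
        ((z + 1) / 2) ^ n *
        ∑ m ∈ Finset.range (n + 1),
          ((ascPochhammer ℝ m).eval (-(n : ℝ)) * (ascPochhammer ℝ m).eval (-(n : ℝ) - β)) /
            ((ascPochhammer ℝ m).eval (α + 1) * (m.factorial : ℝ)) *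
            ((z - 1) / (z + 1)) ^ m := by
  have hc : 0 < α + 1 := by linarith
  have hA : 0 < α + β + n + 1 := by linarith [(n.cast_nonneg : (0 : ℝ) ≤ n)]
  have hΓ {a : ℝ} (ha : 0 < a + 1) (m : ℕ) :
      Real.Gamma (a + m + 1) = Real.Gamma (a + 1) * (ascPochhammer ℝ m).eval (a + 1) := by
    rw [add_right_comm, Real.Gamma_add_nat_eq_mul_ascPochhammer _
      fun k => (add_pos_of_pos_of_nonneg ha k.cast_nonneg).ne']
  have hΓc_ne := (Real.Gamma_pos_of_pos hc).ne'
  have hΓA_ne := (Real.Gamma_pos_of_pos hA).ne'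
  have hfact : (n.factorial : ℝ) ≠ 0 := Nat.cast_ne_zero.mpr n.factorial_ne_zero
  set x := (z - 1) / 2
  have hx1 : (z + 1) / 2 = x + 1 := by ring
  have hratio : (z - 1) / (z + 1) = x / (x + 1) := by
    rw [← hx1, div_div_div_cancel_right₀ two_ne_zero]
  rw [show (n : ℝ) + α + 1 = α + n + 1 by ring, hx1, hratio, mul_assoc _ ((x + 1) ^ n),
    pow_mul_sum_mul_div_pow _ _ _ fun h => hz (by linarith), sum_mul_pow_mul_add_one_pow]
  simp only [hΓ hc, hΓ hA, mul_sum]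
  refine sum_congr rfl fun k _ => ?_
  rw [sum_ascPochhammer_neg_natCast_mul_choose n k (-(n : ℝ) - β) (α + 1)
      (ascPochhammer_pos k _ hc).ne', show α + 1 - (-(n : ℝ) - β) = α + β + n + 1 by ring]
  field_simp

/-- The classical definition (3.15) of the Jacobi polynomial `P^{(α,β)}_n(z)` agrees with
the hypergeometric definition (3.16). -/
theorem jacobi_two_definitions_agree (n : ℕ) (α β : ℝ)
    (hα : -1 < α) (hβ : -1 < β) (hαβ : -1 < α + β) (z : ℝ) (hz : z ≠ -1) :
    Real.Gamma (α + n + 1) / ((n.factorial : ℝ) * Real.Gamma (α + β + n + 1)) *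
        ∑ m ∈ Finset.range (n + 1), (n.choose m : ℝ) *
          (Real.Gamma (α + β + n + m + 1) / Real.Gamma (α + m + 1)) * ((z - 1) / 2) ^ m =
      Real.Gamma ((n : ℝ) + α + 1) / ((n.factorial : ℝ) * Real.Gamma (α + 1)) *
        ((z + 1) / 2) ^ n *
        ∑ m ∈ Finset.range (n + 1),
          ((ascPochhammer ℝ m).eval (-(n : ℝ)) * (ascPochhammer ℝ m).eval (-(n : ℝ) - β)) /
            ((ascPochhammer ℝ m).eval (α + 1) * (m.factorial : ℝ)) *
            ((z - 1) / (z + 1)) ^ m :=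
  jacobi_two_definitions_agree_general n α β hα hαβ z hz
end

section
/- Let j ≥ 0 be a half-integer, m₁, m₂ half-integers with j+m₁, j+m₂ ∈ ℤ and −j ≤ m₁, m₂ ≤ j, n a real number, and ε ∈ {+1, −1}. Then for all ζ, ψ, φ ∈ ℝ and all θ ∈ (0, π): exp(−ε i φ) · ( −cot θ · ∂W/∂φ − ε i · ∂W/∂θ + csc θ · ∂W/∂ψ )(ζ,ψ,θ,φ) = i · √((j+εm₂)(j−εm₂+1)) · W^{(j,n)}_{m₁, m₂−ε}(ζ,ψ,θ,φ), where W denotes the function W^{(j,n)}_{m₁,m₂} and ∂W/∂φ, ∂W/∂θ, ∂W/∂ψ denote its partial derivatives in the respective variables. -/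
/-! Up to a constant, `W^{(j,n)}_{m₁,m₂} = e^{inζ} e^{i(m₁ψ+m₂φ)} d^j_{m₁,m₂}(θ)`, so `∂_φ`
and `∂_ψ` act as multiplication by `i m₂` and `i m₁`, and the claim reduces to the ladder relation
`∂_θ d^j_{m₁,m₂} = ε ((m₁ csc θ - m₂ cot θ) d^j_{m₁,m₂} - (j - ε m₂ + 1) d^j_{m₁,m₂-ε})`.
Writing `d^j_{m₁,m₂}` as a combination of the monomials `sin(θ/2)^a cos(θ/2)^b`, both `∂_θ` and
`m₁ csc θ - m₂ cot θ` shift `(a, b)` by `(∓1, ±1)`, and comparing coefficients leaves a Pascal-type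
recurrence for products of reciprocal factorials. Finally the normalisations match because
`(j - ε m₂ + 1) √((j+m₂)!(j-m₂)!) = √((j+εm₂)(j-εm₂+1)) √((j+m₂-ε)!(j-m₂+ε)!)`. -/

open Finset

/-- `1 / n!`, which is `0` for `n < 0` because `Γ` has poles at the nonpositive integers; this
lets the sums below run over any interval containing their support. -/
noncomputable def invFactorial (n : ℤ) : ℝ := (Real.Gamma (n + 1))⁻¹

theorem invFactorial_of_neg {n : ℤ} (hn : n < 0) : invFactorial n = 0 := by
  obtain ⟨k, hk⟩ : ∃ k : ℕ, (k : ℤ) = -(n + 1) := ⟨_, Int.toNat_of_nonneg (by omega)⟩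
  have hk' : (n : ℝ) + 1 = -k := by rw [← Int.cast_natCast, hk]; push_cast; ring
  rw [invFactorial, hk', Real.Gamma_neg_nat_eq_zero, inv_zero]

theorem intCast_mul_invFactorial (n : ℤ) : n * invFactorial n = invFactorial (n - 1) := by
  rcases lt_trichotomy n 0 with hn | rfl | hn
  · rw [invFactorial_of_neg hn, invFactorial_of_neg (by omega), mul_zero]
  · simp [invFactorial, Real.Gamma_zero]
  · have hn' : (0 : ℝ) < n := by exact_mod_cast hn
    rw [invFactorial, invFactorial, Real.Gamma_add_one hn'.ne', Int.cast_sub, Int.cast_one,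
      sub_add_cancel, mul_inv, ← mul_assoc, mul_inv_cancel₀ hn'.ne', one_mul]

/-- The `p`-th coefficient of `d^j_{m₁,m₂}` in terms of `A = j + m₁`, `C = j + m₂`, `D = j - m₂`. -/
noncomputable def wignerCoeff (A C D p : ℤ) : ℝ :=
  (-1 : ℝ) ^ (C - A + p) *
    (invFactorial (A - p) * invFactorial p * invFactorial (C - A + p) * invFactorial (D - p))

theorem wignerCoeff_eq_zero {A C D p : ℤ} (h : p < 0 ∨ p < A - C ∨ A < p ∨ D < p) :
    wignerCoeff A C D p = 0 := by
  rcases h with h | h | h | h <;> simp only [wignerCoeff]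
  · rw [invFactorial_of_neg h]; ring
  · rw [invFactorial_of_neg (show C - A + p < 0 by omega)]; ring
  · rw [invFactorial_of_neg (show A - p < 0 by omega)]; ring
  · rw [invFactorial_of_neg (show D - p < 0 by omega)]; ring

theorem wignerCoeff_lower (A C D p : ℤ) :
    -((C - A + p : ℤ) : ℝ) * wignerCoeff A C D p + ((A - p + 1 : ℤ) : ℝ) * wignerCoeff A C D (p - 1)
      = ((D : ℝ) + 1) * wignerCoeff A (C - 1) (D + 1) p := by
  have h₁ := intCast_mul_invFactorial (C - A + p)
  have h₂ := intCast_mul_invFactorial (A - p + 1)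
  have h₃ := intCast_mul_invFactorial p
  have h₄ := intCast_mul_invFactorial (D - p + 1)
  rw [show A - p + 1 - 1 = A - p by ring] at h₂
  rw [show D - p + 1 - 1 = D - p by ring] at h₄
  simp only [wignerCoeff]
  rw [show A - (p - 1) = A - p + 1 by ring, show C - A + (p - 1) = C - A + p - 1 by ring,
    show D - (p - 1) = D - p + 1 by ring, show C - 1 - A + p = C - A + p - 1 by ring,
    show D + 1 - p = D - p + 1 by ring, zpow_sub_one₀ (by norm_num : (-1 : ℝ) ≠ 0)]
  push_cast at h₁ h₂ h₃ h₄ ⊢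
  set s := (-1 : ℝ) ^ (C - A + p)
  linear_combination
    (-s * invFactorial (A - p) * invFactorial p * invFactorial (D - p)) * h₁
    - (s * invFactorial (p - 1) * invFactorial (C - A + p - 1) * invFactorial (D - p + 1)) * h₂
    + (s * invFactorial (A - p) * invFactorial (C - A + p - 1) * invFactorial (D - p + 1)) * h₃
    + (s * invFactorial (A - p) * invFactorial p * invFactorial (C - A + p - 1)) * h₄

theorem wignerCoeff_raise (A C D p : ℤ) :
    ((p + 1 : ℤ) : ℝ) * wignerCoeff A C D (p + 1) - ((D - p : ℤ) : ℝ) * wignerCoeff A C D p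
      = ((C : ℝ) + 1) * wignerCoeff A (C + 1) (D - 1) p := by
  have h₁ := intCast_mul_invFactorial (p + 1)
  have h₂ := intCast_mul_invFactorial (A - p)
  have h₃ := intCast_mul_invFactorial (D - p)
  have h₄ := intCast_mul_invFactorial (C - A + p + 1)
  rw [show p + 1 - 1 = p by ring] at h₁
  rw [show C - A + p + 1 - 1 = C - A + p by ring] at h₄
  simp only [wignerCoeff]
  rw [show A - (p + 1) = A - p - 1 by ring, show C - A + (p + 1) = C - A + p + 1 by ring,
    show D - (p + 1) = D - p - 1 by ring, show C + 1 - A + p = C - A + p + 1 by ring,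
    show D - 1 - p = D - p - 1 by ring, zpow_add_one₀ (by norm_num : (-1 : ℝ) ≠ 0)]
  push_cast at h₁ h₂ h₃ h₄ ⊢
  set s := (-1 : ℝ) ^ (C - A + p)
  linear_combination
    (-s * invFactorial (A - p - 1) * invFactorial (C - A + p + 1) * invFactorial (D - p - 1)) * h₁
    + (s * invFactorial p * invFactorial (C - A + p + 1) * invFactorial (D - p - 1)) * h₂
    - (s * invFactorial (A - p) * invFactorial p * invFactorial (C - A + p)) * h₃
    + (s * invFactorial (A - p) * invFactorial p * invFactorial (D - p - 1)) * h₄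

noncomputable def halfAngleMonomial (a b : ℤ) (θ : ℝ) : ℝ :=
  Real.sin (θ / 2) ^ a * Real.cos (θ / 2) ^ b

section HalfAngle

variable {θ : ℝ}

theorem sin_eq_two_mul_sin_half_mul_cos_half :
    Real.sin θ = 2 * Real.sin (θ / 2) * Real.cos (θ / 2) := by
  rw [← Real.sin_two_mul, mul_div_cancel₀ θ two_ne_zero]

theorem sin_half_ne_zero_and_cos_half_ne_zero (h : Real.sin θ ≠ 0) :
    Real.sin (θ / 2) ≠ 0 ∧ Real.cos (θ / 2) ≠ 0 := by
  rw [sin_eq_two_mul_sin_half_mul_cos_half] at h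
  exact ⟨right_ne_zero_of_mul (left_ne_zero_of_mul h), right_ne_zero_of_mul h⟩

theorem halfAngleMonomial_sub_one_add_one (a b : ℤ) (hs : Real.sin (θ / 2) ≠ 0)
    (hc : Real.cos (θ / 2) ≠ 0) :
    halfAngleMonomial (a - 1) (b + 1) θ
      = halfAngleMonomial a b θ * (Real.cos (θ / 2) / Real.sin (θ / 2)) := by
  rw [halfAngleMonomial, halfAngleMonomial, zpow_sub_one₀ hs, zpow_add_one₀ hc]; ring

theorem halfAngleMonomial_add_one_sub_one (a b : ℤ) (hs : Real.sin (θ / 2) ≠ 0)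
    (hc : Real.cos (θ / 2) ≠ 0) :
    halfAngleMonomial (a + 1) (b - 1) θ
      = halfAngleMonomial a b θ * (Real.sin (θ / 2) / Real.cos (θ / 2)) := by
  rw [halfAngleMonomial, halfAngleMonomial, zpow_add_one₀ hs, zpow_sub_one₀ hc]; ring

theorem hasDerivAt_halfAngleMonomial (a b : ℤ) (h : Real.sin θ ≠ 0) :
    HasDerivAt (halfAngleMonomial a b)
      (a / 2 * halfAngleMonomial (a - 1) (b + 1) θ
        - b / 2 * halfAngleMonomial (a + 1) (b - 1) θ) θ := by
  obtain ⟨hs, hc⟩ := sin_half_ne_zero_and_cos_half_ne_zero h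
  have hhalf : HasDerivAt (fun t : ℝ => t / 2) (1 / 2) θ := (hasDerivAt_id θ).div_const 2
  have hsin := (hasDerivAt_zpow a _ (Or.inl hs)).comp θ ((Real.hasDerivAt_sin _).comp θ hhalf)
  have hcos := (hasDerivAt_zpow b _ (Or.inl hc)).comp θ ((Real.hasDerivAt_cos _).comp θ hhalf)
  refine (hsin.mul hcos).congr_deriv ?_
  rw [halfAngleMonomial_sub_one_add_one a b hs hc, halfAngleMonomial_add_one_sub_one a b hs hc,
    halfAngleMonomial, zpow_sub_one₀ hs, zpow_sub_one₀ hc]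
  simp only [Function.comp_def]
  field_simp
  ring

theorem csc_cot_mul_halfAngleMonomial (α β : ℝ) (a b : ℤ) (h : Real.sin θ ≠ 0) :
    (α * (Real.sin θ)⁻¹ - β * (Real.cos θ / Real.sin θ)) * halfAngleMonomial a b θ
      = (α - β) / 2 * halfAngleMonomial (a - 1) (b + 1) θ
        + (α + β) / 2 * halfAngleMonomial (a + 1) (b - 1) θ := by
  obtain ⟨hs, hc⟩ := sin_half_ne_zero_and_cos_half_ne_zero h
  have hcos : Real.cos θ = Real.cos (θ / 2) ^ 2 - Real.sin (θ / 2) ^ 2 := by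
    rw [← Real.cos_two_mul', mul_div_cancel₀ θ two_ne_zero]
  rw [halfAngleMonomial_sub_one_add_one a b hs hc, halfAngleMonomial_add_one_sub_one a b hs hc,
    sin_eq_two_mul_sin_half_mul_cos_half, hcos]
  field_simp
  linear_combination (-α * halfAngleMonomial a b θ) * Real.sin_sq_add_cos_sq (θ / 2)

end HalfAngle

noncomputable def wignerMonomial (A C D p : ℤ) : ℝ → ℝ :=
  halfAngleMonomial (C - A + 2 * p) (A + D - 2 * p)

theorem wignerMonomial_lower (A C D p : ℤ) :
    wignerMonomial A (C - 1) (D + 1) p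
      = halfAngleMonomial (C - A + 2 * p - 1) (A + D - 2 * p + 1) := by
  rw [wignerMonomial]; congr 1 <;> ring

theorem wignerMonomial_raise (A C D p : ℤ) :
    wignerMonomial A (C + 1) (D - 1) p
      = halfAngleMonomial (C - A + 2 * p + 1) (A + D - 2 * p - 1) := by
  rw [wignerMonomial]; congr 1 <;> ring

theorem wignerMonomial_raise_eq_lower_add_one (A C D p : ℤ) :
    wignerMonomial A (C + 1) (D - 1) p = wignerMonomial A (C - 1) (D + 1) (p + 1) := by
  rw [wignerMonomial, wignerMonomial]; congr 1 <;> ring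

theorem hasDerivAt_wignerMonomial (A C D p : ℤ) {θ : ℝ} (hθ : Real.sin θ ≠ 0) :
    HasDerivAt (wignerMonomial A C D p)
      (((C - A + 2 * p : ℤ) : ℝ) / 2 * wignerMonomial A (C - 1) (D + 1) p θ
        - ((A + D - 2 * p : ℤ) : ℝ) / 2 * wignerMonomial A (C + 1) (D - 1) p θ) θ := by
  rw [wignerMonomial_lower, wignerMonomial_raise]
  exact hasDerivAt_halfAngleMonomial _ _ hθ

theorem sum_Icc_comp_add_one {M : Type*} [AddCommMonoid M] {L U : ℤ} (g : ℤ → M) (hL : g L = 0)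
    (hU : g (U + 1) = 0) : ∑ p ∈ Icc L U, g (p + 1) = ∑ p ∈ Icc L U, g p := by
  have hshift : ∑ p ∈ Icc L U, g (p + 1) = ∑ p ∈ Icc (L + 1) (U + 1), g p := by
    rw [← map_add_right_Icc, sum_map]; rfl
  have hbot : ∑ p ∈ Icc (L + 1) (U + 1), g p = ∑ p ∈ Icc L (U + 1), g p :=
    sum_subset (Icc_subset_Icc (by omega) le_rfl) fun p hp hp' => by
      rw [mem_Icc] at hp hp'; rwa [show p = L by omega]
  have htop : ∑ p ∈ Icc L U, g p = ∑ p ∈ Icc L (U + 1), g p :=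
    sum_subset (Icc_subset_Icc le_rfl (by omega)) fun p hp hp' => by
      rw [mem_Icc] at hp hp'; rwa [show p = U + 1 by omega]
  rw [hshift, hbot, htop]

section Wignerd

variable {j m₁ m₂ : ℝ} {A C D : ℤ}

theorem wignerd_eq_sum_s15 (hA : j + m₁ = A) (hC : j + m₂ = C) (hD : j - m₂ = D) {L U : ℤ}
    (hL : L ≤ 0) (hU : D ≤ U) (θ : ℝ) :
    wignerd j m₁ m₂ θ = ∑ p ∈ Icc L U, wignerCoeff A C D p * wignerMonomial A C D p θ := by
  have h₁₂ : m₁ - m₂ = ((A - C : ℤ) : ℝ) := by push_cast; linarith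
  have h₂₁ : m₂ - m₁ = ((C - A : ℤ) : ℝ) := by push_cast; linarith
  have h₂ : 2 * j + m₁ - m₂ = ((A + D : ℤ) : ℝ) := by push_cast; linarith
  rw [wignerd, h₁₂, h₂₁, h₂, hD, hA, ← Int.cast_min]
  simp only [Int.ceil_intCast, Int.floor_intCast]
  refine (sum_congr rfl fun p _ => ?_).trans
    (sum_subset (Icc_subset_Icc (by omega) (by omega)) fun p _ hp => ?_)
  · rw [wignerCoeff, wignerMonomial, halfAngleMonomial, invFactorial, invFactorial, invFactorial,
      invFactorial]
    push_cast
    ring_nf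
  · rw [mem_Icc] at hp
    rw [wignerCoeff_eq_zero (by omega), zero_mul]

theorem csc_cot_mul_wignerMonomial (hA : j + m₁ = A) (hC : j + m₂ = C) (hD : j - m₂ = D) (p : ℤ)
    {θ : ℝ} (hθ : Real.sin θ ≠ 0) :
    (m₁ * (Real.sin θ)⁻¹ - m₂ * (Real.cos θ / Real.sin θ)) * wignerMonomial A C D p θ
      = ((A : ℝ) - C) / 2 * wignerMonomial A (C - 1) (D + 1) p θ
        + ((A : ℝ) - D) / 2 * wignerMonomial A (C + 1) (D - 1) p θ := by
  rw [wignerMonomial_lower, wignerMonomial_raise, wignerMonomial,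
    csc_cot_mul_halfAngleMonomial _ _ _ _ hθ, show m₁ - m₂ = A - C by linarith,
    show m₁ + m₂ = A - D by linarith]

theorem hasDerivAt_wignerd (hA : j + m₁ = A) (hC : j + m₂ = C) (hD : j - m₂ = D) {L U : ℤ}
    (hL : L ≤ 0) (hU : D ≤ U) {θ : ℝ} (hθ : Real.sin θ ≠ 0) :
    HasDerivAt (wignerd j m₁ m₂) (∑ p ∈ Icc L U, wignerCoeff A C D p *
      (((C - A + 2 * p : ℤ) : ℝ) / 2 * wignerMonomial A (C - 1) (D + 1) p θ
        - ((A + D - 2 * p : ℤ) : ℝ) / 2 * wignerMonomial A (C + 1) (D - 1) p θ)) θ := by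
  rw [funext (wignerd_eq_sum_s15 hA hC hD hL hU)]
  exact HasDerivAt.fun_sum fun p _ => (hasDerivAt_wignerMonomial A C D p hθ).const_mul _

theorem hasDerivAt_wignerd_lower (hA : j + m₁ = A) (hC : j + m₂ = C) (hD : j - m₂ = D) {θ : ℝ}
    (hθ : Real.sin θ ≠ 0) :
    HasDerivAt (wignerd j m₁ m₂)
      ((m₁ * (Real.sin θ)⁻¹ - m₂ * (Real.cos θ / Real.sin θ)) * wignerd j m₁ m₂ θ
        - (j - m₂ + 1) * wignerd j m₁ (m₂ - 1) θ) θ := by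
  refine (hasDerivAt_wignerd hA hC hD (L := 0) (U := D + 1) le_rfl (by omega) hθ).congr_deriv ?_
  rw [wignerd_eq_sum_s15 hA hC hD (L := 0) (U := D + 1) le_rfl (by omega),
    wignerd_eq_sum_s15 hA (C := C - 1) (D := D + 1) (by push_cast; linarith) (by push_cast; linarith)
      le_rfl le_rfl, hD, mul_sum, mul_sum, eq_sub_iff_add_eq, ← sum_add_distrib]
  have hshift : ∑ p ∈ Icc 0 (D + 1),
      ((A - p + 1 : ℤ) : ℝ) * wignerCoeff A C D (p - 1) * wignerMonomial A (C - 1) (D + 1) p θ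
      = ∑ p ∈ Icc 0 (D + 1),
      ((A - p : ℤ) : ℝ) * wignerCoeff A C D p * wignerMonomial A (C + 1) (D - 1) p θ := by
    simp_rw [wignerMonomial_raise_eq_lower_add_one]
    refine (sum_Icc_comp_add_one (fun p => ((A - p + 1 : ℤ) : ℝ) * wignerCoeff A C D (p - 1) *
      wignerMonomial A (C - 1) (D + 1) p θ) ?_ ?_).symm.trans (sum_congr rfl fun p _ => ?_)
    · rw [wignerCoeff_eq_zero (by omega), mul_zero, zero_mul]
    · rw [wignerCoeff_eq_zero (by omega), mul_zero, zero_mul]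
    · simp only [add_sub_cancel_right]
      push_cast; ring
  rw [← sub_eq_zero, ← sum_sub_distrib, ← sub_eq_zero.mpr hshift, ← sum_sub_distrib]
  refine sum_congr rfl fun p _ => ?_
  have hw := wignerCoeff_lower A C D p
  push_cast at hw ⊢
  linear_combination -wignerCoeff A C D p * csc_cot_mul_wignerMonomial hA hC hD p hθ
    - wignerMonomial A (C - 1) (D + 1) p θ * hw

theorem hasDerivAt_wignerd_raise (hA : j + m₁ = A) (hC : j + m₂ = C) (hD : j - m₂ = D) {θ : ℝ}
    (hθ : Real.sin θ ≠ 0) :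
    HasDerivAt (wignerd j m₁ m₂)
      (-((m₁ * (Real.sin θ)⁻¹ - m₂ * (Real.cos θ / Real.sin θ)) * wignerd j m₁ m₂ θ)
        + (j + m₂ + 1) * wignerd j m₁ (m₂ + 1) θ) θ := by
  refine (hasDerivAt_wignerd hA hC hD (L := 0) (U := D + 1) le_rfl (by omega) hθ).congr_deriv ?_
  rw [wignerd_eq_sum_s15 hA hC hD (L := 0) (U := D + 1) le_rfl (by omega),
    wignerd_eq_sum_s15 hA (C := C + 1) (D := D - 1) (by push_cast; linarith) (by push_cast; linarith)
      (L := 0) (U := D + 1) le_rfl (by omega), hC, mul_sum, mul_sum, eq_neg_add_iff_add_eq,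
    ← sum_add_distrib]
  have hshift : ∑ p ∈ Icc 0 (D + 1),
      (p : ℝ) * wignerCoeff A C D p * wignerMonomial A (C - 1) (D + 1) p θ
      = ∑ p ∈ Icc 0 (D + 1),
      ((p + 1 : ℤ) : ℝ) * wignerCoeff A C D (p + 1) * wignerMonomial A (C + 1) (D - 1) p θ := by
    simp_rw [wignerMonomial_raise_eq_lower_add_one]
    refine (sum_Icc_comp_add_one (fun p => (p : ℝ) * wignerCoeff A C D p *
      wignerMonomial A (C - 1) (D + 1) p θ) ?_ ?_).symm
    · simp
    · rw [wignerCoeff_eq_zero (by omega), mul_zero, zero_mul]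
  rw [← sub_eq_zero, ← sum_sub_distrib, ← sub_eq_zero.mpr hshift, ← sum_sub_distrib]
  refine sum_congr rfl fun p _ => ?_
  have hw := wignerCoeff_raise A C D p
  push_cast at hw ⊢
  linear_combination wignerCoeff A C D p * csc_cot_mul_wignerMonomial hA hC hD p hθ
    + wignerMonomial A (C + 1) (D - 1) p θ * hw

theorem hasDerivAt_wignerd_ladder {ε : ℝ} (hA : j + m₁ = A) (hC : j + m₂ = C) (hD : j - m₂ = D)
    (hε : ε = 1 ∨ ε = -1) {θ : ℝ} (hθ : Real.sin θ ≠ 0) :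
    HasDerivAt (wignerd j m₁ m₂)
      (ε * ((m₁ * (Real.sin θ)⁻¹ - m₂ * (Real.cos θ / Real.sin θ)) * wignerd j m₁ m₂ θ
        - (j - ε * m₂ + 1) * wignerd j m₁ (m₂ - ε) θ)) θ := by
  rcases hε with rfl | rfl
  · convert hasDerivAt_wignerd_lower hA hC hD hθ using 1
    ring
  · convert hasDerivAt_wignerd_raise hA hC hD hθ using 1
    rw [sub_neg_eq_add]
    ring

theorem wignerd_eq_zero (hA : j + m₁ = A) (hC : j + m₂ = C) (hD : j - m₂ = D)
    (h : A < 0 ∨ C + D < A ∨ C < 0 ∨ D < 0) (θ : ℝ) : wignerd j m₁ m₂ θ = 0 := by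
  rw [wignerd_eq_sum_s15 hA hC hD le_rfl le_rfl]
  refine sum_eq_zero fun p hp => ?_
  rw [mem_Icc] at hp
  rw [wignerCoeff_eq_zero (by omega), zero_mul]

end Wignerd

noncomputable def wignerPrefactor (j n m₁ m₂ ζ ψ φ : ℝ) : ℂ :=
  ((Real.sqrt (Real.Gamma (j + m₁ + 1) * Real.Gamma (j - m₁ + 1)) *
      Real.sqrt (Real.Gamma (j + m₂ + 1) * Real.Gamma (j - m₂ + 1)) : ℝ) : ℂ) *
    Complex.exp (Complex.I * n * ζ) * Complex.exp (Complex.I * (m₁ * ψ + m₂ * φ))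

theorem sqrt_mul_sqrt_gamma_mul_gamma {x y : ℝ} (hx : 0 < x) (hy : 0 ≤ y) :
    Real.sqrt (x * (y + 1)) * Real.sqrt (Real.Gamma x * Real.Gamma (y + 2))
      = (y + 1) * Real.sqrt (Real.Gamma (x + 1) * Real.Gamma (y + 1)) := by
  have hprod : x * (y + 1) * (Real.Gamma x * Real.Gamma (y + 2))
      = (y + 1) ^ 2 * (Real.Gamma (x + 1) * Real.Gamma (y + 1)) := by
    rw [Real.Gamma_add_one hx.ne', show y + 2 = y + 1 + 1 by ring,
      Real.Gamma_add_one (by linarith : y + 1 ≠ 0)]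
    ring
  rw [← Real.sqrt_mul (by positivity), hprod, Real.sqrt_mul (sq_nonneg _),
    Real.sqrt_sq (by linarith)]

theorem sqrt_mul_wignerPrefactor_sub {j n m₁ m₂ ε : ℝ} (hε : ε = 1 ∨ ε = -1) (h₁ : 1 ≤ j + ε * m₂)
    (h₂ : 0 ≤ j - ε * m₂) (ζ ψ φ : ℝ) :
    ((Real.sqrt ((j + ε * m₂) * (j - ε * m₂ + 1)) : ℝ) : ℂ) * wignerPrefactor j n m₁ (m₂ - ε) ζ ψ φ
      = ((j - ε * m₂ + 1 : ℝ) : ℂ) * Complex.exp (-(ε : ℂ) * Complex.I * φ)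
        * wignerPrefactor j n m₁ m₂ ζ ψ φ := by
  have hsqrt : Real.sqrt ((j + ε * m₂) * (j - ε * m₂ + 1)) *
      Real.sqrt (Real.Gamma (j + (m₂ - ε) + 1) * Real.Gamma (j - (m₂ - ε) + 1))
      = (j - ε * m₂ + 1) * Real.sqrt (Real.Gamma (j + m₂ + 1) * Real.Gamma (j - m₂ + 1)) := by
    rcases hε with rfl | rfl
    · convert sqrt_mul_sqrt_gamma_mul_gamma (x := j + m₂) (y := j - m₂) (by linarith) (by linarith)
        using 3 <;> ring_nf
    · convert sqrt_mul_sqrt_gamma_mul_gamma (x := j - m₂) (y := j + m₂) (by linarith) (by linarith)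
        using 3 <;> ring_nf
  have hexp : Complex.exp (Complex.I * (m₁ * ψ + (m₂ - ε : ℝ) * φ))
      = Complex.exp (-(ε : ℂ) * Complex.I * φ) * Complex.exp (Complex.I * (m₁ * ψ + m₂ * φ)) := by
    rw [← Complex.exp_add]; push_cast; ring_nf
  have hsqrtC := congrArg Complex.ofReal hsqrt
  simp only [wignerPrefactor, hexp, Complex.ofReal_mul] at hsqrtC ⊢
  linear_combination (Real.sqrt (Real.Gamma (j + m₁ + 1) * Real.Gamma (j - m₁ + 1)) : ℂ) *
    Complex.exp (Complex.I * n * ζ) * Complex.exp (-(ε : ℂ) * Complex.I * φ) *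
    Complex.exp (Complex.I * (m₁ * ψ + m₂ * φ)) * hsqrtC

section WignerD

variable {j n m₁ m₂ ζ ψ θ φ : ℝ}

theorem hasDerivAt_WignerD_phi :
    HasDerivAt (fun t => WignerD j n m₁ m₂ ζ ψ θ t)
      (Complex.I * m₂ * WignerD j n m₁ m₂ ζ ψ θ φ) φ := by
  unfold WignerD
  split_ifs
  · have hlin : HasDerivAt (fun t : ℝ => Complex.I * (m₁ * ψ + m₂ * t)) (Complex.I * m₂) φ := by
      simpa using ((hasDerivAt_id φ).ofReal_comp.const_mul (m₂ : ℂ)).const_add (m₁ * ψ : ℂ)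
        |>.const_mul Complex.I
    exact (hlin.cexp.const_mul _).mul_const _ |>.congr_deriv (by ring)
  · simpa using hasDerivAt_const φ (0 : ℂ)

theorem hasDerivAt_WignerD_psi :
    HasDerivAt (fun t => WignerD j n m₁ m₂ ζ t θ φ)
      (Complex.I * m₁ * WignerD j n m₁ m₂ ζ ψ θ φ) ψ := by
  unfold WignerD
  split_ifs
  · have hlin : HasDerivAt (fun t : ℝ => Complex.I * (m₁ * t + m₂ * φ)) (Complex.I * m₁) ψ := by
      simpa using ((hasDerivAt_id ψ).ofReal_comp.const_mul (m₁ : ℂ)).add_const (m₂ * φ : ℂ)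
        |>.const_mul Complex.I
    exact (hlin.cexp.const_mul _).mul_const _ |>.congr_deriv (by ring)
  · simpa using hasDerivAt_const ψ (0 : ℂ)

variable {A C D : ℤ}

/-- Out of range both sides vanish: every term of `wignerd` then contains `1/n!` for a negative
integer `n`. -/
theorem WignerD_eq_wignerPrefactor_mul (hA : j + m₁ = A) (hC : j + m₂ = C) (hD : j - m₂ = D) :
    WignerD j n m₁ m₂ ζ ψ θ φ = wignerPrefactor j n m₁ m₂ ζ ψ φ * wignerd j m₁ m₂ θ := by
  unfold WignerD
  split_ifs with h
  · rfl
  · rw [wignerd_eq_zero hA hC hD ?_ θ, Complex.ofReal_zero, mul_zero]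
    by_contra! hnonneg
    obtain ⟨hA₀, hAC, hC₀, hD₀⟩ := hnonneg
    rify at hA₀ hAC hC₀ hD₀
    exact h ⟨⟨by linarith, by linarith⟩, ⟨by linarith, by linarith⟩, ⟨A, hA⟩,
      ⟨C + D - A, by push_cast; linarith⟩, ⟨C, hC⟩, ⟨D, hD⟩⟩

theorem hasDerivAt_WignerD_theta (hA : j + m₁ = A) (hC : j + m₂ = C) (hD : j - m₂ = D) {d' : ℝ}
    (hd : HasDerivAt (wignerd j m₁ m₂) d' θ) :
    HasDerivAt (fun t => WignerD j n m₁ m₂ ζ ψ t φ) (wignerPrefactor j n m₁ m₂ ζ ψ φ * d') θ := by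
  simp_rw [WignerD_eq_wignerPrefactor_mul hA hC hD]
  exact hd.ofReal_comp.const_mul _

end WignerD

theorem sqrt_mul_WignerD_sub {j n m₁ m₂ ε : ℝ} {A C D : ℤ} (hA : j + m₁ = A) (hC : j + m₂ = C)
    (hD : j - m₂ = D) (hC₀ : 0 ≤ C) (hD₀ : 0 ≤ D) (hε : ε = 1 ∨ ε = -1) (ζ ψ θ φ : ℝ) :
    ((Real.sqrt ((j + ε * m₂) * (j - ε * m₂ + 1)) : ℝ) : ℂ) * WignerD j n m₁ (m₂ - ε) ζ ψ θ φ
      = ((j - ε * m₂ + 1 : ℝ) : ℂ) * Complex.exp (-(ε : ℂ) * Complex.I * φ)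
        * wignerPrefactor j n m₁ m₂ ζ ψ φ * wignerd j m₁ (m₂ - ε) θ := by
  have hC₀' : (0 : ℝ) ≤ C := by exact_mod_cast hC₀
  have hD₀' : (0 : ℝ) ≤ D := by exact_mod_cast hD₀
  rcases hε with rfl | rfl
  · have hC' : j + (m₂ - 1) = (C - 1 : ℤ) := by push_cast; linarith
    have hD' : j - (m₂ - 1) = (D + 1 : ℤ) := by push_cast; linarith
    rw [WignerD_eq_wignerPrefactor_mul hA hC' hD', ← mul_assoc]
    rcases hC₀.eq_or_lt with hC0 | hC1
    · rw [wignerd_eq_zero hA hC' hD' (by omega)]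
      simp
    · have hC1' : (1 : ℝ) ≤ C := by exact_mod_cast hC1
      rw [sqrt_mul_wignerPrefactor_sub (Or.inl rfl) (by linarith) (by linarith)]
  · have hC' : j + (m₂ - -1) = (C + 1 : ℤ) := by push_cast; linarith
    have hD' : j - (m₂ - -1) = (D - 1 : ℤ) := by push_cast; linarith
    rw [WignerD_eq_wignerPrefactor_mul hA hC' hD', ← mul_assoc]
    rcases hD₀.eq_or_lt with hD0 | hD1
    · rw [wignerd_eq_zero hA hC' hD' (by omega)]
      simp
    · have hD1' : (1 : ℝ) ≤ D := by exact_mod_cast hD1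
      rw [sqrt_mul_wignerPrefactor_sub (Or.inr rfl) (by linarith) (by linarith)]

theorem wignerD_right_raising_lowering_general (j m₁ m₂ n ε : ℝ) (hj : HalfInt j)
    (hjm₁ : ∃ a : ℤ, j + m₁ = a) (hjm₂ : ∃ a : ℤ, j + m₂ = a)
    (hm₂l : -j ≤ m₂) (hm₂u : m₂ ≤ j)
    (hε : ε = 1 ∨ ε = -1) (ζ ψ φ : ℝ) (θ : ℝ) (hθ : θ ∈ Set.Ioo 0 Real.pi) :
    Complex.exp (-(ε : ℂ) * Complex.I * (φ : ℂ)) *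
        (-((Real.cos θ / Real.sin θ : ℝ) : ℂ) *
            deriv (fun t : ℝ => WignerD j n m₁ m₂ ζ ψ θ t) φ -
          (ε : ℂ) * Complex.I * deriv (fun t : ℝ => WignerD j n m₁ m₂ ζ ψ t φ) θ +
          (((Real.sin θ)⁻¹ : ℝ) : ℂ) *
            deriv (fun t : ℝ => WignerD j n m₁ m₂ ζ t θ φ) ψ) =
      Complex.I * ((Real.sqrt ((j + ε * m₂) * (j - ε * m₂ + 1)) : ℝ) : ℂ) *
        WignerD j n m₁ (m₂ - ε) ζ ψ θ φ := by
  obtain ⟨k, hk⟩ := hj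
  obtain ⟨A, hA⟩ := hjm₁
  obtain ⟨C, hC⟩ := hjm₂
  have hD : j - m₂ = (k - C : ℤ) := by push_cast; linarith
  have hC₀ : 0 ≤ C := by exact_mod_cast (by linarith : (0 : ℝ) ≤ C)
  have hD₀ : 0 ≤ k - C := by exact_mod_cast (by linarith : (0 : ℝ) ≤ (k - C : ℤ))
  have hsin : Real.sin θ ≠ 0 := (Real.sin_pos_of_pos_of_lt_pi hθ.1 hθ.2).ne'
  have hε2 : (ε : ℂ) ^ 2 = 1 := by rcases hε with rfl | rfl <;> norm_num
  rw [hasDerivAt_WignerD_phi.deriv, hasDerivAt_WignerD_psi.deriv,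
    (hasDerivAt_WignerD_theta hA hC hD (hasDerivAt_wignerd_ladder hA hC hD hε hsin)).deriv,
    mul_assoc Complex.I _ (WignerD j n m₁ (m₂ - ε) ζ ψ θ φ),
    sqrt_mul_WignerD_sub hA hC hD hC₀ hD₀ hε, WignerD_eq_wignerPrefactor_mul hA hC hD]
  push_cast
  linear_combination -Complex.exp (-(ε : ℂ) * Complex.I * φ) * Complex.I *
    wignerPrefactor j n m₁ m₂ ζ ψ φ *
    ((m₁ * (Complex.sin θ)⁻¹ - m₂ * (Complex.cos θ / Complex.sin θ)) * wignerd j m₁ m₂ θ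
      - (j - ε * m₂ + 1) * wignerd j m₁ (m₂ - ε) θ) * hε2

/-- Formula (3.24): the right regular action of the raising/lowering elements
`γ₁ ± i γ₂` of `𝔲(2)`, written as explicit differential operators in Euler-angle
coordinates, shifts the second lower index of a Wigner D-function:
`e^{∓iφ}(−cot θ ∂_φ ∓ i ∂_θ + csc θ ∂_ψ) W^{(j,n)}_{m₁,m₂}
  = i √((j±m₂)(j∓m₂+1)) W^{(j,n)}_{m₁,m₂∓1}` (sign `ε = ±1`). -/
theorem wignerD_right_raising_lowering (j m₁ m₂ n ε : ℝ) (hj : HalfInt j) (hj0 : 0 ≤ j)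
    (hm₁ : HalfInt m₁) (hm₂ : HalfInt m₂)
    (hjm₁ : ∃ a : ℤ, j + m₁ = a) (hjm₂ : ∃ a : ℤ, j + m₂ = a)
    (hm₁l : -j ≤ m₁) (hm₁u : m₁ ≤ j) (hm₂l : -j ≤ m₂) (hm₂u : m₂ ≤ j)
    (hε : ε = 1 ∨ ε = -1) (ζ ψ φ : ℝ) (θ : ℝ) (hθ : θ ∈ Set.Ioo 0 Real.pi) :
    Complex.exp (-(ε : ℂ) * Complex.I * (φ : ℂ)) *
        (-((Real.cos θ / Real.sin θ : ℝ) : ℂ) *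
            deriv (fun t : ℝ => WignerD j n m₁ m₂ ζ ψ θ t) φ -
          (ε : ℂ) * Complex.I * deriv (fun t : ℝ => WignerD j n m₁ m₂ ζ ψ t φ) θ +
          (((Real.sin θ)⁻¹ : ℝ) : ℂ) *
            deriv (fun t : ℝ => WignerD j n m₁ m₂ ζ t θ φ) ψ) =
      Complex.I * ((Real.sqrt ((j + ε * m₂) * (j - ε * m₂ + 1)) : ℝ) : ℂ) *
        WignerD j n m₁ (m₂ - ε) ζ ψ θ φ :=
  wignerD_right_raising_lowering_general j m₁ m₂ n ε hj hjm₁ hjm₂ hm₂l hm₂u hε ζ ψ φ θ hθ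
end

section
/- For every z ∈ ℂ and w ∈ ℝ, set u = |z|² − 2iw and R = √((|z|²+1)² + 4w²) (a positive real), and define the 3×3 complex matrices P = [[1/√2, 0, −1/√2], [0, 1, 0], [1/√2, 0, 1/√2]]; n̄ = [[1, 0, 0], [√2·z, 1, 0], [|z|²−2iw, √2·conj(z), 1]]; K = [[−(u−1)/R, −2·conj(z)/(u+1), 0], [2z/R, −(conj(u)−1)/(u+1), 0], [0, 0, (u+1)/R]]; A = diag(R, 1, 1/R); N = [[1, √2·conj(z)/(u+1), conj(u)/R²], [0, 1, √2·z/(conj(u)+1)], [0, 0, 1]]. Then P · n̄ · P⁻¹ = K · (P · A · N · P⁻¹). -/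
/-!
Multiplying on the right by `P⁻¹`, it suffices to show `P * nbar = K * (P * A * N)`. This is an
identity between matrices of rational functions in `√2, z, z̄, u, ū, R`; after clearing
denominators every entry follows from `√2 ^ 2 = 2`, `u + ū = 2 z z̄` and
`R ^ 2 = (u + 1) (ū + 1) = |u + 1| ^ 2`, so it holds over any field satisfying these relations.
-/

open Matrix ComplexConjugate

theorem iwasawa_identity {F : Type*} [Field F] {s z zc u uc r : F} (hs : s ^ 2 = 2)
    (hs0 : s ≠ 0) (hu : u + uc = 2 * z * zc) (hr : r ^ 2 = (u + 1) * (uc + 1)) (hr0 : r ≠ 0) :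
    !![1 / s, 0, -(1 / s); 0, 1, 0; 1 / s, 0, 1 / s] * !![1, 0, 0; s * z, 1, 0; u, s * zc, 1] =
      !![-(u - 1) / r, -2 * zc / (u + 1), 0; 2 * z / r, -(uc - 1) / (u + 1), 0;
          0, 0, (u + 1) / r] *
        (!![1 / s, 0, -(1 / s); 0, 1, 0; 1 / s, 0, 1 / s] * diagonal ![r, 1, 1 / r] *
          !![1, s * zc / (u + 1), uc / r ^ 2; 0, 1, s * z / (uc + 1); 0, 0, 1]) := by
  have hprod : (u + 1) * (uc + 1) ≠ 0 := hr ▸ pow_ne_zero 2 hr0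
  have hu1 : u + 1 ≠ 0 := left_ne_zero_of_mul hprod
  have huc1 : uc + 1 ≠ 0 := right_ne_zero_of_mul hprod
  simp only [diagonal_vec3, mul_fin_three]
  ext i j
  fin_cases i <;> fin_cases j <;> simp <;> field_simp <;> grind

/-- The explicit Iwasawa decomposition (5.3) of the paper: with
`u = |z|² − 2iw` and `R = √((|z|²+1)² + 4w²)`, the conjugate `P·n̄·P⁻¹` of a generic
element `n̄` of the opposite nilpotent subgroup of `SU(2,1)` decomposes as the product of
a unitary factor `K`, and the conjugate `P·A·N·P⁻¹` of a torus factor `A` and a nilpotent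
factor `N`. -/
theorem su21_iwasawa_decomposition (z : ℂ) (w : ℝ) (u : ℂ) (R : ℝ)
    (hu : u = ((‖z‖ : ℝ) : ℂ) ^ 2 - 2 * Complex.I * (w : ℂ))
    (hR : R = Real.sqrt ((‖z‖ ^ 2 + 1) ^ 2 + 4 * w ^ 2))
    (P nbar K A N : Matrix (Fin 3) (Fin 3) ℂ)
    (hP : P = !![((1 / Real.sqrt 2 : ℝ) : ℂ), 0, -((1 / Real.sqrt 2 : ℝ) : ℂ);
                  0, 1, 0;
                  ((1 / Real.sqrt 2 : ℝ) : ℂ), 0, ((1 / Real.sqrt 2 : ℝ) : ℂ)])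
    (hnbar : nbar = !![1, 0, 0;
                       ((Real.sqrt 2 : ℝ) : ℂ) * z, 1, 0;
                       ((‖z‖ : ℝ) : ℂ) ^ 2 - 2 * Complex.I * (w : ℂ),
                         ((Real.sqrt 2 : ℝ) : ℂ) * (starRingEnd ℂ) z, 1])
    (hK : K = !![-(u - 1) / (R : ℂ), -2 * (starRingEnd ℂ) z / (u + 1), 0;
                 2 * z / (R : ℂ), -((starRingEnd ℂ) u - 1) / (u + 1), 0;
                 0, 0, (u + 1) / (R : ℂ)])
    (hA : A = Matrix.diagonal ![(R : ℂ), 1, 1 / (R : ℂ)])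
    (hN : N = !![1, ((Real.sqrt 2 : ℝ) : ℂ) * (starRingEnd ℂ) z / (u + 1),
                   (starRingEnd ℂ) u / (R : ℂ) ^ 2;
                 0, 1, ((Real.sqrt 2 : ℝ) : ℂ) * z / ((starRingEnd ℂ) u + 1);
                 0, 0, 1]) :
    P * nbar * P⁻¹ = K * (P * A * N * P⁻¹) := by
  have hs : ((Real.sqrt 2 : ℝ) : ℂ) ^ 2 = 2 := by norm_cast; simp
  have hs0 : ((Real.sqrt 2 : ℝ) : ℂ) ≠ 0 := by simp
  have hu_add_conj : u + conj u = 2 * z * conj z := by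
    rw [mul_assoc, Complex.mul_conj', hu]
    simp only [map_sub, map_mul, map_pow, map_ofNat, Complex.conj_ofReal, Complex.conj_I]
    ring
  have hR_sq : (R : ℂ) ^ 2 = (u + 1) * (conj u + 1) := by
    have hR_sq_real : R ^ 2 = (‖z‖ ^ 2 + 1) ^ 2 + 4 * w ^ 2 := by
      rw [hR]; exact Real.sq_sqrt (by positivity)
    rw [← Complex.ofReal_pow, hR_sq_real, hu]
    simp only [map_sub, map_mul, map_pow, map_ofNat, Complex.conj_ofReal, Complex.conj_I]
    push_cast
    linear_combination 4 * (w : ℂ) ^ 2 * Complex.I_sq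
  have hR0 : (R : ℂ) ≠ 0 := by
    rw [Complex.ofReal_ne_zero, hR]; positivity
  have hsplit : P * nbar = K * (P * A * N) := by
    subst hP hnbar hK hA hN
    rw [← hu]
    push_cast
    exact iwasawa_identity hs hs0 hu_add_conj hR_sq hR0
  rw [hsplit, Matrix.mul_assoc]
end
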